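/- arXiv:2010.04519 — 8 statements merged into one kernel-verified Lean document; each statement's English description precedes it below -/
import Mathlib

section
/- Let (l_j)_{j∈ℕ} be a sequence of bounded linear functionals on a Hilbert space Y that is square-summable, i.e. ∑_{j=1}^∞ l_j(y)² < ∞ for all y ∈ Y, and complete, i.e. for every y ≠ 0 there is j with l_j(y) ≠ 0. Define P_m : Y → ℝ^m by (P_m y)_j = l_j(y). Then there exists an injective bounded linear operator A : Y → Y such that P_m* P_m y → A y for every y ∈ Y as m → ∞. -/
open Filter Topology

open scoped RealInnerProductSpace

/-- For a complete, square-summable sequence of bounded linear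
functionals `l j` on a real Hilbert space `Y`, the operators `P_m* P_m`
(given by `y ↦ ∑_{j<m} l_j(y) • η_j` with `η_j` the Riesz representer of `l_j`)
converge strongly to an injective bounded linear operator `A`. -/
theorem statement0
    {Y : Type*} [NormedAddCommGroup Y] [InnerProductSpace ℝ Y] [CompleteSpace Y]
    (l : ℕ → (Y →L[ℝ] ℝ))
    (hsq : ∀ y : Y, Summable (fun j => (l j y) ^ 2))
    (hcomplete : ∀ y : Y, y ≠ 0 → ∃ j, l j y ≠ 0) :
    ∃ A : Y →L[ℝ] Y, Function.Injective A ∧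
      ∀ y : Y,
        Tendsto
          (fun m => ∑ j ∈ Finset.range m,
            l j y • ((InnerProductSpace.toDual ℝ Y).symm (l j) : Y))
          atTop (𝓝 (A y)) := by
  classical
  set η : ℕ → Y := fun j => (InnerProductSpace.toDual ℝ Y).symm (l j) with hη
  have hηl : ∀ j (z : Y), ⟪η j, z⟫ = l j z := fun j z =>
    InnerProductSpace.toDual_symm_apply
  -- Cauchy-Schwarz for finite sums, sqrt form
  have CS : ∀ (s : Finset ℕ) (a b : ℕ → ℝ),
      ∑ j ∈ s, a j * b j ≤ Real.sqrt (∑ j ∈ s, (a j)^2) * Real.sqrt (∑ j ∈ s, (b j)^2) := by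
    intro s a b
    have h := Finset.sum_mul_sq_le_sq_mul_sq s a b
    calc ∑ j ∈ s, a j * b j ≤ |∑ j ∈ s, a j * b j| := le_abs_self _
      _ = Real.sqrt ((∑ j ∈ s, a j * b j)^2) := (Real.sqrt_sq_eq_abs _).symm
      _ ≤ Real.sqrt ((∑ j ∈ s, (a j)^2) * ∑ j ∈ s, (b j)^2) := Real.sqrt_le_sqrt h
      _ = _ := Real.sqrt_mul (by positivity) _
  -- Banach–Steinhaus family
  set g : {p : Finset ℕ × (ℕ → ℝ) // ∑ j ∈ p.1, (p.2 j)^2 ≤ 1} → (Y →L[ℝ] ℝ) :=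
    fun p => ∑ j ∈ p.1.1, p.1.2 j • l j with hg
  have hgapp : ∀ p y, g p y = ∑ j ∈ p.1.1, p.1.2 j * l j y := by
    intro p y
    simp [hg, ContinuousLinearMap.sum_apply]
  have hbdd : ∀ y : Y, ∃ C, ∀ p, ‖g p y‖ ≤ C := by
    intro y
    refine ⟨Real.sqrt (∑' j, (l j y)^2), fun p => ?_⟩
    rw [hgapp, Real.norm_eq_abs, abs_le]
    constructor
    · have h1 : ∑ j ∈ p.1.1, (-p.1.2 j) * l j y ≤
          Real.sqrt (∑ j ∈ p.1.1, (p.1.2 j)^2) * Real.sqrt (∑ j ∈ p.1.1, (l j y)^2) := by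
        simpa using CS p.1.1 (fun j => -p.1.2 j) (fun j => l j y)
      have h2 : Real.sqrt (∑ j ∈ p.1.1, (p.1.2 j)^2) ≤ 1 := by
        simpa using Real.sqrt_le_sqrt p.2
      have h3 : Real.sqrt (∑ j ∈ p.1.1, (l j y)^2) ≤ Real.sqrt (∑' j, (l j y)^2) :=
        Real.sqrt_le_sqrt (Summable.sum_le_tsum _ (fun i _ => sq_nonneg _) (hsq y))
      have := h1.trans (mul_le_mul h2 h3 (Real.sqrt_nonneg _) zero_le_one)
      simp only [neg_mul, Finset.sum_neg_distrib, one_mul] at this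
      linarith
    · have h1 := CS p.1.1 p.1.2 (fun j => l j y)
      have h2 : Real.sqrt (∑ j ∈ p.1.1, (p.1.2 j)^2) ≤ 1 := by
        simpa using Real.sqrt_le_sqrt p.2
      have h3 : Real.sqrt (∑ j ∈ p.1.1, (l j y)^2) ≤ Real.sqrt (∑' j, (l j y)^2) :=
        Real.sqrt_le_sqrt (Summable.sum_le_tsum _ (fun i _ => sq_nonneg _) (hsq y))
      have := h1.trans (mul_le_mul h2 h3 (Real.sqrt_nonneg _) zero_le_one)
      simpa using this
  obtain ⟨C, hC⟩ := banach_steinhaus hbdd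
  have hC0 : 0 ≤ C := le_trans (norm_nonneg _) (hC ⟨(∅, 0), by simp⟩)
  -- key finite estimate
  have hkey : ∀ (y : Y) (s : Finset ℕ),
      Real.sqrt (∑ j ∈ s, (l j y)^2) ≤ C * ‖y‖ := by
    intro y s
    set t := ∑ j ∈ s, (l j y)^2 with ht
    have ht0 : 0 ≤ t := Finset.sum_nonneg fun _ _ => sq_nonneg _
    rcases eq_or_lt_of_le ht0 with h0 | hpos
    · rw [← h0, Real.sqrt_zero]; positivity
    · set c : ℕ → ℝ := fun j => l j y / Real.sqrt t with hc
      have hst : Real.sqrt t ≠ 0 := by positivity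
      have hsum1 : ∑ j ∈ s, (c j)^2 ≤ 1 := by
        have h : ∑ j ∈ s, (c j)^2 = t / t := by
          simp only [hc, div_pow, Real.sq_sqrt ht0, ← Finset.sum_div, ← ht]
        rw [h, div_self hpos.ne']
      set p : {p : Finset ℕ × (ℕ → ℝ) // ∑ j ∈ p.1, (p.2 j)^2 ≤ 1} := ⟨(s, c), hsum1⟩ with hp
      have happ : g p y = Real.sqrt t := by
        rw [hgapp]
        have : ∑ j ∈ s, c j * l j y = t / Real.sqrt t := by
          simp only [hc, div_mul_eq_mul_div, ← sq]
          rw [← Finset.sum_div]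
        simpa [hp, this] using div_sqrt
      have := (g p).le_opNorm y
      rw [happ] at this
      calc Real.sqrt t = ‖Real.sqrt t‖ := (Real.norm_of_nonneg (Real.sqrt_nonneg _)).symm
        _ ≤ ‖g p‖ * ‖y‖ := this
        _ ≤ C * ‖y‖ := mul_le_mul_of_nonneg_right (hC p) (norm_nonneg _)
  -- finite-sum norm estimate
  have hnorm : ∀ (y : Y) (s : Finset ℕ),
      ‖∑ j ∈ s, l j y • η j‖ ≤ C * Real.sqrt (∑ j ∈ s, (l j y)^2) := by
    intro y s
    set v := ∑ j ∈ s, l j y • η j with hv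
    have hinner : ⟪v, v⟫ = ∑ j ∈ s, l j y * l j v := by
      rw [hv, sum_inner]
      exact Finset.sum_congr rfl fun j _ => by rw [real_inner_smul_left, hηl]
    have h1 : ‖v‖^2 ≤ Real.sqrt (∑ j ∈ s, (l j y)^2) * Real.sqrt (∑ j ∈ s, (l j v)^2) := by
      rw [← real_inner_self_eq_norm_sq, hinner]
      exact CS s _ _
    have h2 : ‖v‖^2 ≤ Real.sqrt (∑ j ∈ s, (l j y)^2) * (C * ‖v‖) :=
      h1.trans (mul_le_mul_of_nonneg_left (hkey v s) (Real.sqrt_nonneg _))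
    rcases eq_or_lt_of_le (norm_nonneg v) with h0 | hpos
    · rw [← h0]; positivity
    · rw [sq] at h2
      nlinarith [h2, hpos]
  -- summability
  have hsummable : ∀ y : Y, Summable (fun j => l j y • η j) := by
    intro y
    rw [summable_iff_vanishing_norm]
    intro ε hε
    have hε' : (0:ℝ) < (ε / (C + 1))^2 := by positivity
    obtain ⟨s, hs⟩ := summable_iff_vanishing_norm.1 (hsq y) _ hε'
    refine ⟨s, fun t htd => ?_⟩
    have hts : ∑ j ∈ t, (l j y)^2 < (ε / (C + 1))^2 := by
      have := hs t htd
      rw [Real.norm_eq_abs] at this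
      exact (le_abs_self _).trans_lt this
    have hsqrt : Real.sqrt (∑ j ∈ t, (l j y)^2) < ε / (C + 1) := by
      have := Real.sqrt_lt_sqrt (Finset.sum_nonneg fun _ _ => sq_nonneg _) hts
      rwa [Real.sqrt_sq (by positivity)] at this
    calc ‖∑ j ∈ t, l j y • η j‖ ≤ C * Real.sqrt (∑ j ∈ t, (l j y)^2) := hnorm y t
      _ ≤ (C + 1) * Real.sqrt (∑ j ∈ t, (l j y)^2) :=
          mul_le_mul_of_nonneg_right (by linarith) (Real.sqrt_nonneg _)
      _ < (C + 1) * (ε / (C + 1)) :=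
          mul_lt_mul_of_pos_left hsqrt (by linarith)
      _ = ε := mul_div_cancel₀ _ (by linarith)
  -- the linear map
  set Φ : Y →ₗ[ℝ] Y :=
    { toFun := fun y => ∑' j, l j y • η j
      map_add' := fun y z => by
        simp only [map_add, add_smul]
        exact Summable.tsum_add (hsummable y) (hsummable z)
      map_smul' := fun c y => by
        simp only [map_smul, smul_eq_mul, RingHom.id_apply, mul_smul]
        exact Summable.tsum_const_smul c (hsummable y) } with hΦ
  have hΦbound : ∀ y : Y, ‖Φ y‖ ≤ (C * C) * ‖y‖ := by
    intro y
    have h := (hsummable y).hasSum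
    refine le_of_tendsto' h.norm (fun s => ?_)
    calc ‖∑ j ∈ s, l j y • η j‖ ≤ C * Real.sqrt (∑ j ∈ s, (l j y)^2) := hnorm y s
      _ ≤ C * (C * ‖y‖) := mul_le_mul_of_nonneg_left (hkey y s) hC0
      _ = (C * C) * ‖y‖ := by ring
  set A : Y →L[ℝ] Y := Φ.mkContinuous (C * C) hΦbound with hA
  have hAapp : ∀ y : Y, A y = ∑' j, l j y • η j := fun y => rfl
  refine ⟨A, ?_, ?_⟩
  · rw [injective_iff_map_eq_zero]
    intro z hz
    by_contra hz0
    obtain ⟨j, hj⟩ := hcomplete z hz0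
    have hs : HasSum (fun j => l j z • η j) (A z) := by
      rw [hAapp]; exact (hsummable z).hasSum
    have h2 : HasSum (fun j => (l j z)^2) ⟪z, A z⟫ := by
      have := hs.mapL (innerSL ℝ z)
      convert this using 2 with k
      · rfl
      rw [innerSL_apply_apply, real_inner_smul_right, real_inner_comm, hηl, sq]
      rfl
    rw [hz, inner_zero_right] at h2
    have hle : (l j z)^2 ≤ 0 := by
      have := Summable.le_tsum h2.summable j (fun i _ => sq_nonneg _)
      rwa [h2.tsum_eq] at this
    exact hj ((pow_eq_zero_iff (two_ne_zero)).mp (le_antisymm hle (sq_nonneg _)))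
  · intro y
    have hs : HasSum (fun j => l j y • η j) (A y) := by
      rw [hAapp]; exact (hsummable y).hasSum
    exact hs.tendsto_sum_nat
end

section
/- Let K : X → Y be an injective compact operator between Hilbert spaces, and let (A_m) be a sequence of bounded self-adjoint positive semidefinite operators on Y converging pointwise (strongly) to an injective bounded operator A, with sup_m ‖A_m‖ < ∞. Then K* A_m K converges to K* A K in operator norm as m → ∞. -/
open Filter Topology RealInnerProductSpace

/-- If `K : X → Y` is an injective compact operator between real
Hilbert spaces and `(A_m)` are bounded self-adjoint positive semidefinite
operators on `Y` converging strongly to an injective bounded operator `A`, with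
uniformly bounded norms, then `K* A_m K → K* A K` in operator norm. -/
theorem statement2
    {X Y : Type*} [NormedAddCommGroup X] [InnerProductSpace ℝ X] [CompleteSpace X]
    [NormedAddCommGroup Y] [InnerProductSpace ℝ Y] [CompleteSpace Y]
    (K : X →L[ℝ] Y) (hKcomp : IsCompactOperator K) (hKinj : Function.Injective K)
    (A : ℕ → (Y →L[ℝ] Y)) (Alim : Y →L[ℝ] Y)
    (hsa : ∀ m, IsSelfAdjoint (A m))
    (hpos : ∀ m, ∀ y : Y, 0 ≤ ⟪(A m) y, y⟫)
    (hstrong : ∀ y : Y, Tendsto (fun m => (A m) y) atTop (𝓝 (Alim y)))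
    (hAinj : Function.Injective Alim)
    (hbdd : ∃ C : ℝ, ∀ m, ‖A m‖ ≤ C) :
    Tendsto
      (fun m =>
        ‖(ContinuousLinearMap.adjoint K).comp ((A m).comp K) -
          (ContinuousLinearMap.adjoint K).comp (Alim.comp K)‖)
      atTop (𝓝 0) := by
  obtain ⟨C, hC⟩ := hbdd
  set C' := C + ‖Alim‖ with hC'def
  have hC'0 : 0 ≤ C' := add_nonneg ((norm_nonneg (A 0)).trans (hC 0)) (norm_nonneg _)
  have hBnorm : ∀ m, ‖A m - Alim‖ ≤ C' := fun m =>
    (norm_sub_le _ _).trans (add_le_add (hC m) le_rfl)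
  have key : Tendsto (fun m => ‖((A m - Alim).comp K)‖) atTop (𝓝 0) := by
    rw [Metric.tendsto_atTop]
    intro ε hε
    have hS : IsCompact (closure (K '' Metric.closedBall 0 1)) :=
      hKcomp.isCompact_closure_image_of_bounded Metric.isBounded_closedBall
    set δ := ε / (2 * (C' + 1)) with hδdef
    have hδ : 0 < δ := by positivity
    obtain ⟨t, htf, htcover⟩ := Metric.totallyBounded_iff.mp hS.totallyBounded δ hδ
    have hev : ∀ᶠ m in atTop, ∀ y ∈ t, ‖(A m - Alim) y‖ < ε / 2 := by
      rw [Filter.eventually_all_finite htf]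
      intro y hy
      have h0 : Tendsto (fun m => (A m) y - Alim y) atTop (𝓝 0) := by
        simpa using (hstrong y).sub (tendsto_const_nhds (x := Alim y))
      have h1 := h0.norm
      simp only [norm_zero] at h1
      have h2 := h1.eventually_lt_const (by positivity : (0 : ℝ) < ε / 2)
      filter_upwards [h2] with m hm
      simpa using hm
    obtain ⟨N, hN⟩ := Filter.eventually_atTop.mp hev
    refine ⟨N, fun m hm => ?_⟩
    have hbound : ‖(A m - Alim).comp K‖ ≤ C' * δ + ε / 2 := by
      apply ContinuousLinearMap.opNorm_le_of_unit_norm (by positivity)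
      intro x hx
      have hKx : K x ∈ closure (K '' Metric.closedBall 0 1) :=
        subset_closure ⟨x, by simp [hx], rfl⟩
      obtain ⟨y, hy, hdy⟩ := Set.mem_iUnion₂.mp (htcover hKx)
      have h1 : ‖(A m - Alim) (K x - y)‖ ≤ C' * δ := by
        calc ‖(A m - Alim) (K x - y)‖ ≤ ‖A m - Alim‖ * ‖K x - y‖ :=
              (A m - Alim).le_opNorm _
          _ ≤ C' * δ := by
              apply mul_le_mul (hBnorm m) _ (norm_nonneg _) hC'0
              rw [← dist_eq_norm]
              exact (Metric.mem_ball.mp hdy).le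
      calc ‖((A m - Alim).comp K) x‖ = ‖(A m - Alim) (K x - y) + (A m - Alim) y‖ := by
            simp [map_sub]
        _ ≤ ‖(A m - Alim) (K x - y)‖ + ‖(A m - Alim) y‖ := norm_add_le _ _
        _ ≤ C' * δ + ε / 2 := add_le_add h1 (hN m hm y hy).le
    have hlt : C' * δ + ε / 2 < ε := by
      have : C' * δ < ε / 2 := by
        rw [hδdef]
        have h : C' < C' + 1 := lt_add_one C'
        calc C' * (ε / (2 * (C' + 1))) < (C' + 1) * (ε / (2 * (C' + 1))) := by
              apply mul_lt_mul_of_pos_right h (by positivity)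
          _ = ε / 2 := by field_simp
      linarith
    rw [Real.dist_eq, sub_zero, abs_of_nonneg (norm_nonneg _)]
    exact lt_of_le_of_lt hbound hlt
  have heq : ∀ m, (ContinuousLinearMap.adjoint K).comp ((A m).comp K) -
      (ContinuousLinearMap.adjoint K).comp (Alim.comp K) =
      (ContinuousLinearMap.adjoint K).comp ((A m - Alim).comp K) := by
    intro m
    rw [← ContinuousLinearMap.comp_sub, ← ContinuousLinearMap.sub_comp]
  simp_rw [heq]
  have hsq : Tendsto (fun m => ‖ContinuousLinearMap.adjoint K‖ * ‖(A m - Alim).comp K‖)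
      atTop (𝓝 0) := by
    simpa using key.const_mul ‖ContinuousLinearMap.adjoint K‖
  exact squeeze_zero (fun m => norm_nonneg _)
    (fun m => ContinuousLinearMap.opNorm_comp_le _ _) hsq
end

section
/- Let K : X → Y be an injective bounded linear operator between Hilbert spaces, and let P_m : Y → ℝ^m be linear maps such that P_m* P_m converges strongly to an injective bounded operator A on Y with sup_m ‖P_m‖ < ∞. Then for every x ∈ X the orthogonal projection of x onto the null space of P_m K converges to 0 in norm as m → ∞. -/
open Filter Topology RealInnerProductSpace

variable {X F : Type*} [NormedAddCommGroup X] [InnerProductSpace ℝ X] [CompleteSpace X]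
  [NormedAddCommGroup F] [InnerProductSpace ℝ F] [CompleteSpace F]

/-- The orthogonal projection onto the (closed) kernel of a continuous linear map,
viewed as a map `X → X`. -/
noncomputable def kerProjection (f : X →L[ℝ] F) : X → X :=
  fun x => (Submodule.orthogonalProjectionOnto (LinearMap.ker (f : X →ₗ[ℝ] F)) x : X)

/-- A bounded real sequence converges along any ultrafilter. -/
lemma ultra_lim_of_bounded (𝒰 : Ultrafilter ℕ) {g : ℕ → ℝ} {M : ℝ}
    (h : ∀ n, g n ∈ Set.Icc (-M) M) :
    ∃ a ∈ Set.Icc (-M) M, Filter.Tendsto g 𝒰 (𝓝 a) := by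
  obtain ⟨a, ha, hle⟩ := isCompact_Icc.ultrafilter_le_nhds (𝒰.map g)
    (by rw [Ultrafilter.coe_map, Filter.le_principal_iff]
        exact Filter.mem_map.mpr (Filter.univ_mem' h))
  exact ⟨a, ha, by rwa [Ultrafilter.coe_map] at hle⟩

/-- If `t ↦ t^2*a + 2*t*b` is nonnegative with `a ≥ 0`, then `b = 0`. -/
lemma eq_zero_of_quad {a b : ℝ} (ha : 0 ≤ a) (h : ∀ t : ℝ, 0 ≤ t ^ 2 * a + 2 * t * b) :
    b = 0 := by
  have hs : 0 < a + 1 := by linarith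
  have key := h (-b / (a + 1))
  have e : (-b / (a + 1)) * (a + 1) = -b := by field_simp
  set t := -b / (a + 1) with ht
  have hb2 : b ^ 2 ≤ 0 := by nlinarith [key, e, hs, sq_nonneg t, sq_nonneg b, sq_nonneg (t * (a + 1))]
  have : b ^ 2 = 0 := le_antisymm hb2 (sq_nonneg b)
  exact pow_eq_zero_iff (two_ne_zero) |>.mp this

/-- If `K : X → Y` is injective and `P_m* P_m` converges strongly to
an injective bounded operator `A` with `sup_m ‖P_m‖ < ∞`, then for every `x` the
orthogonal projection of `x` onto the null space of `P_m K` converges to `0`. -/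
theorem statement3
    {Y : Type*} [NormedAddCommGroup Y] [InnerProductSpace ℝ Y] [CompleteSpace Y]
    (K : X →L[ℝ] Y) (hKinj : Function.Injective K)
    (P : (m : ℕ) → (Y →L[ℝ] EuclideanSpace ℝ (Fin m)))
    (A : Y →L[ℝ] Y) (hAinj : Function.Injective A)
    (hstrong : ∀ y : Y,
      Tendsto (fun m => (ContinuousLinearMap.adjoint (P m)) ((P m) y)) atTop (𝓝 (A y)))
    (hbdd : ∃ C : ℝ, ∀ m, ‖P m‖ ≤ C) :
    ∀ x : X, Tendsto (fun m => ‖kerProjection ((P m).comp K) x‖) atTop (𝓝 0) := by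
  intro x
  set Q : ℕ → X := fun m => kerProjection ((P m).comp K) x with hQ
  -- the projection lies in the kernel
  have hmem : ∀ m, Q m ∈ LinearMap.ker (((P m).comp K) : X →ₗ[ℝ] EuclideanSpace ℝ (Fin m)) := fun m => by
    exact (Submodule.orthogonalProjectionOnto (LinearMap.ker (((P m).comp K) : X →ₗ[ℝ] EuclideanSpace ℝ (Fin m))) x).2
  have hker : ∀ m, ((P m).comp K) (Q m) = 0 := fun m => LinearMap.mem_ker.mp (hmem m)
  -- ‖Q m‖² = ⟪Q m, x⟫
  have hsq : ∀ m, ‖Q m‖ ^ 2 = ⟪Q m, x⟫ := by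
    intro m
    have hperp := Submodule.sub_starProjection_mem_orthogonal
      (K := LinearMap.ker (((P m).comp K) : X →ₗ[ℝ] EuclideanSpace ℝ (Fin m))) x
    have h0 : ⟪Q m, x - Q m⟫ = 0 :=
      (Submodule.mem_orthogonal _ _).mp hperp (Q m) (hmem m)
    have := inner_sub_right (𝕜 := ℝ) (Q m) x (Q m)
    rw [h0] at this
    have h1 : ⟪Q m, Q m⟫ = ⟪Q m, x⟫ := by linarith
    rw [← h1, real_inner_self_eq_norm_sq]
  -- ‖Q m‖ ≤ ‖x‖
  have hnorm : ∀ m, ‖Q m‖ ≤ ‖x‖ := by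
    intro m
    have h1 := hsq m
    have h2 : ⟪Q m, x⟫ ≤ ‖Q m‖ * ‖x‖ := real_inner_le_norm (Q m) x
    nlinarith [norm_nonneg (Q m), norm_nonneg x]
  -- inner products under P m and the adjoint
  have hPP : ∀ (m : ℕ) (y y' : Y),
      ⟪(ContinuousLinearMap.adjoint (P m)) ((P m) y), y'⟫ = ⟪(P m) y, (P m) y'⟫ :=
    fun m y y' => ContinuousLinearMap.adjoint_inner_left (P m) y' ((P m) y)
  have hAyy' : ∀ y y' : Y,
      Tendsto (fun m => ⟪(P m) y, (P m) y'⟫) atTop (𝓝 ⟪A y, y'⟫) := by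
    intro y y'
    have := Filter.Tendsto.inner (𝕜 := ℝ) (hstrong y) (tendsto_const_nhds (x := y'))
    simpa [hPP] using this
  -- A is symmetric and positive
  have hAsymm : ∀ y y' : Y, ⟪A y, y'⟫ = ⟪A y', y⟫ := by
    intro y y'
    exact tendsto_nhds_unique (hAyy' y y')
      ((hAyy' y' y).congr fun m => real_inner_comm _ _)
  have hApos : ∀ y : Y, 0 ≤ ⟪A y, y⟫ := fun y =>
    ge_of_tendsto' (hAyy' y y) fun m => real_inner_self_nonneg
  -- positivity + symmetry: ⟪A u, u⟫ = 0 → A u = 0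
  have hAzero : ∀ u : Y, ⟪A u, u⟫ = 0 → A u = 0 := by
    intro u hu
    have hb : ∀ v : Y, ⟪A u, v⟫ = 0 := by
      intro v
      refine eq_zero_of_quad (hApos v) ?_
      intro t
      have h1 : ⟪A v, u⟫ = ⟪A u, v⟫ := hAsymm v u
      have expand : ⟪A (u + t • v), u + t • v⟫ =
          t ^ 2 * ⟪A v, v⟫ + 2 * t * ⟪A u, v⟫ := by
        rw [map_add, map_smul]
        simp only [inner_add_left, inner_add_right, real_inner_smul_left,
          real_inner_smul_right, hu, h1]
        ring
      have := hApos (u + t • v)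
      rwa [expand] at this
    have := hb (A u)
    exact inner_self_eq_zero.mp this
  -- now the main convergence, along every ultrafilter
  rw [tendsto_iff_ultrafilter]
  intro 𝒰 h𝒰
  -- the weak limit functional along 𝒰
  have hex : ∀ w : X, ∃ a, Tendsto (fun m => ⟪Q m, w⟫) 𝒰 (𝓝 a) ∧ |a| ≤ ‖x‖ * ‖w‖ := by
    intro w
    have hb : ∀ m, ⟪Q m, w⟫ ∈ Set.Icc (-(‖x‖ * ‖w‖)) (‖x‖ * ‖w‖) := by
      intro m
      have h1 := abs_real_inner_le_norm (Q m) w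
      have h2 : ‖Q m‖ * ‖w‖ ≤ ‖x‖ * ‖w‖ :=
        mul_le_mul_of_nonneg_right (hnorm m) (norm_nonneg _)
      have h3 := abs_le.mp (h1.trans h2)
      exact ⟨h3.1, h3.2⟩
    obtain ⟨a, ha, hta⟩ := ultra_lim_of_bounded 𝒰 hb
    exact ⟨a, hta, abs_le.mpr ⟨ha.1, ha.2⟩⟩
  choose c hc hcb using hex
  have hadd : ∀ w₁ w₂, c (w₁ + w₂) = c w₁ + c w₂ := by
    intro w₁ w₂
    refine tendsto_nhds_unique (hc (w₁ + w₂)) ?_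
    have := (hc w₁).add (hc w₂)
    simpa [inner_add_right] using this
  have hsmul : ∀ (r : ℝ) (w : X), c (r • w) = r * c w := by
    intro r w
    refine tendsto_nhds_unique (hc (r • w)) ?_
    have := (hc w).const_mul r
    simpa [real_inner_smul_right] using this
  let L : X →L[ℝ] ℝ := LinearMap.mkContinuous
    { toFun := c, map_add' := hadd, map_smul' := fun r w => by simpa using hsmul r w }
    ‖x‖ (fun w => by simpa [Real.norm_eq_abs] using hcb w)
  set z : X := (InnerProductSpace.toDual ℝ X).symm L with hzdef
  have hz : ∀ w, ⟪z, w⟫ = c w := fun w => InnerProductSpace.toDual_symm_apply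
  have hzw : ∀ w, Tendsto (fun m => ⟪Q m, w⟫) 𝒰 (𝓝 ⟪z, w⟫) := by
    intro w; rw [hz]; exact hc w
  -- key claim: ⟪K z, A (K w)⟫ = 0 for all w
  have hKz : ∀ w : X, ⟪K z, A (K w)⟫ = 0 := by
    intro w
    have h1 : Tendsto (fun m => ⟪K (Q m), A (K w)⟫) 𝒰 (𝓝 ⟪K z, A (K w)⟫) := by
      have h := hzw ((ContinuousLinearMap.adjoint K) (A (K w)))
      simpa [ContinuousLinearMap.adjoint_inner_right] using h
    have h2 : Tendsto (fun m => ⟪K (Q m), A (K w)⟫) atTop (𝓝 0) := by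
      have hzero : ∀ m,
          ⟪K (Q m), (ContinuousLinearMap.adjoint (P m)) ((P m) (K w))⟫ = 0 := by
        intro m
        rw [ContinuousLinearMap.adjoint_inner_right]
        have h0 : (P m) (K (Q m)) = 0 := by
          simpa using hker m
        rw [h0, inner_zero_left]
      have heq : ∀ m, ⟪K (Q m), A (K w)⟫ =
          ⟪K (Q m), A (K w) - (ContinuousLinearMap.adjoint (P m)) ((P m) (K w))⟫ := by
        intro m; rw [inner_sub_right, hzero, sub_zero]
      have hd : Tendsto
          (fun m => A (K w) - (ContinuousLinearMap.adjoint (P m)) ((P m) (K w)))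
          atTop (𝓝 0) := by
        have := tendsto_const_nhds (f := atTop (α := ℕ)) (x := A (K w)) |>.sub (hstrong (K w))
        simpa using this
      have hdn : Tendsto
          (fun m => (‖K‖ * ‖x‖) *
            ‖A (K w) - (ContinuousLinearMap.adjoint (P m)) ((P m) (K w))‖)
          atTop (𝓝 0) := by
        have := (hd.norm).const_mul (‖K‖ * ‖x‖)
        simpa using this
      refine squeeze_zero_norm (fun m => ?_) hdn
      rw [heq m]
      calc ‖⟪K (Q m), A (K w) - (ContinuousLinearMap.adjoint (P m)) ((P m) (K w))⟫‖
          ≤ ‖K (Q m)‖ * ‖A (K w) - (ContinuousLinearMap.adjoint (P m)) ((P m) (K w))‖ :=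
            norm_inner_le_norm _ _
        _ ≤ (‖K‖ * ‖x‖) * ‖A (K w) - (ContinuousLinearMap.adjoint (P m)) ((P m) (K w))‖ := by
            apply mul_le_mul_of_nonneg_right _ (norm_nonneg _)
            calc ‖K (Q m)‖ ≤ ‖K‖ * ‖Q m‖ := K.le_opNorm _
              _ ≤ ‖K‖ * ‖x‖ := mul_le_mul_of_nonneg_left (hnorm m) (norm_nonneg _)
    exact tendsto_nhds_unique h1 (h2.mono_left h𝒰)
  -- deduce z = 0
  have hAKz : A (K z) = 0 := by
    apply hAzero
    have := hKz z
    rwa [real_inner_comm] at this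
  have hKz0 : K z = 0 := hAinj (by rw [hAKz, map_zero])
  have hz0 : z = 0 := hKinj (by rw [hKz0, map_zero])
  -- conclude
  have hx : Tendsto (fun m => ⟪Q m, x⟫) 𝒰 (𝓝 0) := by
    have := hzw x
    rwa [hz0, inner_zero_left] at this
  have h2 : Tendsto (fun m => ‖Q m‖ ^ 2) 𝒰 (𝓝 0) := by
    refine hx.congr fun m => (hsq m).symm
  have h3 := (Real.continuous_sqrt.tendsto 0).comp h2
  have h4 : Tendsto (fun m => ‖Q m‖) 𝒰 (𝓝 (Real.sqrt 0)) := by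
    refine h3.congr fun m => ?_
    simp [Real.sqrt_sq (norm_nonneg (Q m))]
  simpa using h4
end

section
/- Let m ∈ ℕ and let η_1,…,η_m be vectors in a Hilbert space Y with equal norms ‖η_j‖ = ‖η_1‖ and satisfying the angle condition max_{j≤m} ∑_{i≠j} |⟨η_i, η_j⟩| / ‖η_1‖² ≤ c for some c < 1. Define P_m : Y → ℝ^m by (P_m y)_j = ⟨η_j, y⟩. Then every singular value σ of P_m satisfies ‖η_1‖² (1−c) ≤ σ² ≤ ‖η_1‖² (1+c), and consequently the condition number κ(P_m) = ‖P_m‖·‖P_m^+‖ satisfies κ(P_m)² ≤ (1+c)/(1−c). -/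
open RealInnerProductSpace

/-- If `η_1, …, η_m` have equal norms `r` and satisfy the angle
condition `∑_{i≠j} |⟨η_i, η_j⟩| ≤ c r²` with `c < 1`, then for the map
`P : Y → ℝ^m`, `(P y)_j = ⟨η_j, y⟩`, every singular value `σ` of `P` (i.e.
`P* P y = σ² y` for some nonzero `y ⊥ ker P`) satisfies
`r²(1−c) ≤ σ² ≤ r²(1+c)`; consequently `κ(P)² ≤ (1+c)/(1−c)`, i.e. any two
singular values `σ, τ` satisfy `σ² ≤ ((1+c)/(1−c)) τ²`. -/
theorem statement4
    {Y : Type*} [NormedAddCommGroup Y] [InnerProductSpace ℝ Y] [CompleteSpace Y]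
    (m : ℕ) (η : Fin m → Y) (r c : ℝ) (hc : c < 1)
    (hnorm : ∀ j, ‖η j‖ = r)
    (hangle : ∀ j, ∑ i ∈ Finset.univ.erase j, |⟪η i, η j⟫| ≤ c * r ^ 2)
    (P : Y →L[ℝ] EuclideanSpace ℝ (Fin m))
    (hP : ∀ y : Y, ∀ j : Fin m, P y j = ⟪η j, y⟫) :
    (∀ σ : ℝ, 0 ≤ σ →
      (∃ y : Y, y ≠ 0 ∧ y ∈ (LinearMap.ker (P : Y →ₗ[ℝ] EuclideanSpace ℝ (Fin m)))ᗮ ∧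
        (ContinuousLinearMap.adjoint P) (P y) = σ ^ 2 • y) →
      r ^ 2 * (1 - c) ≤ σ ^ 2 ∧ σ ^ 2 ≤ r ^ 2 * (1 + c)) ∧
    (∀ σ τ : ℝ, 0 ≤ σ → 0 ≤ τ →
      (∃ y : Y, y ≠ 0 ∧ y ∈ (LinearMap.ker (P : Y →ₗ[ℝ] EuclideanSpace ℝ (Fin m)))ᗮ ∧
        (ContinuousLinearMap.adjoint P) (P y) = σ ^ 2 • y) →
      (∃ z : Y, z ≠ 0 ∧ z ∈ (LinearMap.ker (P : Y →ₗ[ℝ] EuclideanSpace ℝ (Fin m)))ᗮ ∧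
        (ContinuousLinearMap.adjoint P) (P z) = τ ^ 2 • z) →
      σ ^ 2 ≤ ((1 + c) / (1 - c)) * τ ^ 2) := by
  have key : ∀ σ : ℝ, (∃ y : Y, y ≠ 0 ∧ y ∈ (LinearMap.ker (P : Y →ₗ[ℝ] EuclideanSpace ℝ (Fin m)))ᗮ ∧
        (ContinuousLinearMap.adjoint P) (P y) = σ ^ 2 • y) →
      (r ^ 2 * (1 - c) ≤ σ ^ 2 ∧ σ ^ 2 ≤ r ^ 2 * (1 + c)) ∧ (0 < r ∧ 0 ≤ c) := by
    rintro σ ⟨y, hy0, hyperp, heig⟩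
    set v : Fin m → ℝ := fun j => ⟪η j, y⟫ with hv
    -- the eigen-equation for the Gram matrix
    have hveq : ∀ k, ∑ j, ⟪η j, η k⟫ * v j = σ ^ 2 * v k := by
      intro k
      have h1 : ⟪η k, (ContinuousLinearMap.adjoint P) (P y)⟫ = σ ^ 2 * ⟪η k, y⟫ := by
        rw [heig, real_inner_smul_right]
      rw [ContinuousLinearMap.adjoint_inner_right] at h1
      have h2 : ⟪P (η k), P y⟫ = ∑ j, ⟪η j, η k⟫ * v j := by
        rw [PiLp.inner_apply]
        refine Finset.sum_congr rfl fun j _ => ?_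
        simp [hP, RCLike.inner_apply, hv, mul_comm]
      rw [h2] at h1
      exact h1
    -- v is nonzero
    have hvne : ∃ k0, v k0 ≠ 0 := by
      by_contra h
      push_neg at h
      have hPy : P y = 0 := by
        ext j
        simpa [hP] using h j
      have hyk : y ∈ LinearMap.ker (P : Y →ₗ[ℝ] EuclideanSpace ℝ (Fin m)) := by
        simpa [LinearMap.mem_ker] using hPy
      have := (Submodule.mem_orthogonal _ y).mp hyperp y hyk
      exact hy0 (inner_self_eq_zero.mp this)
    obtain ⟨k0, hk0⟩ := hvne
    -- r > 0
    have hr : 0 < r := by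
      have hη : η k0 ≠ 0 := by
        intro h
        apply hk0
        simp [hv, h]
      have := hnorm k0
      rw [← this]
      exact norm_pos_iff.mpr hη
    -- c ≥ 0
    have hc0 : 0 ≤ c := by
      have h1 := hangle k0
      have h2 : (0:ℝ) ≤ ∑ i ∈ Finset.univ.erase k0, |⟪η i, η k0⟫| :=
        Finset.sum_nonneg fun i _ => abs_nonneg _
      nlinarith [pow_pos hr 2]
    -- pick index maximizing |v k|
    obtain ⟨k, -, hk⟩ := Finset.exists_max_image (Finset.univ : Finset (Fin m))
      (fun j => |v j|) ⟨k0, Finset.mem_univ k0⟩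
    have hvk : 0 < |v k| := lt_of_lt_of_le (abs_pos.mpr hk0) (hk k0 (Finset.mem_univ k0))
    -- Gershgorin estimate
    have hsplit : ⟪η k, η k⟫ * v k + ∑ j ∈ Finset.univ.erase k, ⟪η j, η k⟫ * v j
        = σ ^ 2 * v k := by
      have h0 := hveq k
      rw [← Finset.add_sum_erase Finset.univ (fun j => ⟪η j, η k⟫ * v j)
        (Finset.mem_univ k)] at h0
      exact h0
    have hkk : ⟪η k, η k⟫ = r ^ 2 := by
      rw [real_inner_self_eq_norm_sq, hnorm]
    have hS : |σ ^ 2 * v k - r ^ 2 * v k| ≤ c * r ^ 2 * |v k| := by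
      have h1 : σ ^ 2 * v k - r ^ 2 * v k
          = ∑ j ∈ Finset.univ.erase k, ⟪η j, η k⟫ * v j := by
        rw [← hsplit, hkk]; ring
      rw [h1]
      calc |∑ j ∈ Finset.univ.erase k, ⟪η j, η k⟫ * v j|
          ≤ ∑ j ∈ Finset.univ.erase k, |⟪η j, η k⟫ * v j| := Finset.abs_sum_le_sum_abs _ _
        _ ≤ ∑ j ∈ Finset.univ.erase k, |⟪η j, η k⟫| * |v k| := by
            refine Finset.sum_le_sum fun j _ => ?_
            rw [abs_mul]
            exact mul_le_mul_of_nonneg_left (hk j (Finset.mem_univ j)) (abs_nonneg _)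
        _ = (∑ j ∈ Finset.univ.erase k, |⟪η j, η k⟫|) * |v k| := by
            rw [Finset.sum_mul]
        _ ≤ c * r ^ 2 * |v k| :=
            mul_le_mul_of_nonneg_right (hangle k) (abs_nonneg _)
    have habs : |σ ^ 2 - r ^ 2| ≤ c * r ^ 2 := by
      have h1 : |σ ^ 2 - r ^ 2| * |v k| ≤ c * r ^ 2 * |v k| := by
        rw [← abs_mul]
        calc |(σ ^ 2 - r ^ 2) * v k| = |σ ^ 2 * v k - r ^ 2 * v k| := by ring_nf
          _ ≤ c * r ^ 2 * |v k| := hS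
      exact le_of_mul_le_mul_right h1 hvk
    rw [abs_le] at habs
    refine ⟨⟨by nlinarith [habs.1], by nlinarith [habs.2]⟩, hr, hc0⟩
  constructor
  · intro σ _ h
    exact (key σ h).1
  · intro σ τ _ _ hσ hτ
    obtain ⟨⟨h1, h2⟩, hr, hc0⟩ := key σ hσ
    obtain ⟨⟨h3, h4⟩, -, -⟩ := key τ hτ
    have h1c : (0:ℝ) < 1 - c := by linarith
    rw [div_mul_eq_mul_div, le_div_iff₀ h1c]
    nlinarith [mul_le_mul_of_nonneg_left h3 (by linarith : (0:ℝ) ≤ 1 + c),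
      mul_le_mul_of_nonneg_right h2 h1c.le]
end

section
/- Let (X_l)_{l=1}^∞ be i.i.d. real random variables with E[X_l] = 0, E[X_l²] = 1 and E[X_l⁴] < ∞. Let (u_j)_{j≤m} and (e_j)_{j≤m} be two orthonormal bases of ℝ^m and let λ_1,…,λ_m > 0. Then E[ | ∑_{j=1}^m λ_j ( (∑_{l=1}^m X_l ⟨u_j, e_l⟩)² − 1 ) |² ] ≤ (max_{j≤m} λ_j²) (E[X_1⁴] + 5) m. -/
open MeasureTheory ProbabilityTheory RealInnerProductSpace Finset

section helpers
variable {n : ℕ}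

lemma sum_swap3 (F : Fin n → Fin n → Fin n → ℝ) :
    ∑ j, ∑ k, ∑ k', F j k k' = ∑ k, ∑ k', ∑ j, F j k k' := by
  calc ∑ j, ∑ k, ∑ k', F j k k'
      = ∑ j, ∑ p ∈ univ ×ˢ univ, F j p.1 p.2 := by
        refine Finset.sum_congr rfl fun j _ => (Finset.sum_product' univ univ (fun a b => F j a b)).symm
    _ = ∑ p ∈ univ ×ˢ univ, ∑ j, F j p.1 p.2 := Finset.sum_comm
    _ = ∑ k, ∑ k', ∑ j, F j k k' := Finset.sum_product' univ univ (fun a b => ∑ j, F j a b)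

lemma sum_swap4 (F : Fin n → Fin n → Fin n → Fin n → ℝ) :
    ∑ k, ∑ k', ∑ j, ∑ j', F k k' j j' = ∑ j, ∑ j', ∑ k, ∑ k', F k k' j j' := by
  calc ∑ k, ∑ k', ∑ j, ∑ j', F k k' j j'
      = ∑ p ∈ univ ×ˢ univ, ∑ j, ∑ j', F p.1 p.2 j j' :=
        (Finset.sum_product' univ univ (fun a b => ∑ j, ∑ j', F a b j j')).symm
    _ = ∑ p ∈ univ ×ˢ univ, ∑ r ∈ univ ×ˢ univ, F p.1 p.2 r.1 r.2 := by
        refine Finset.sum_congr rfl fun p _ =>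
          (Finset.sum_product' univ univ (fun a b => F p.1 p.2 a b)).symm
    _ = ∑ r ∈ univ ×ˢ univ, ∑ p ∈ univ ×ˢ univ, F p.1 p.2 r.1 r.2 := Finset.sum_comm
    _ = ∑ r ∈ univ ×ˢ univ, ∑ k, ∑ k', F k k' r.1 r.2 := by
        refine Finset.sum_congr rfl fun r _ => Finset.sum_product' univ univ (fun a b => F a b r.1 r.2)
    _ = ∑ j, ∑ j', ∑ k, ∑ k', F k k' j j' :=
        Finset.sum_product' univ univ (fun a b => ∑ k, ∑ k', F k k' a b)

lemma sum_Ioi_swap (F : Fin n → Fin n → ℝ) :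
    ∑ k, ∑ k' ∈ Ioi k, F k k' = ∑ k, ∑ k' ∈ Iio k, F k' k :=
  Finset.sum_comm' (by intro x y; simp [mem_Ioi, mem_Iio])

lemma sum_split_Iic (k : Fin n) (f : Fin n → ℝ) :
    ∑ k', f k' = ∑ k' ∈ Iic k, f k' + ∑ k' ∈ Ioi k, f k' := by
  rw [← Finset.sum_union (Finset.disjoint_left.mpr
    (fun a ha hb => absurd (mem_Ioi.mp hb) (not_lt.mpr (mem_Iic.mp ha))))]
  refine (Finset.sum_congr ?_ fun _ _ => rfl).symm
  ext x; simp [mem_union, mem_Iic, mem_Ioi, le_or_gt]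
end helpers

section aux
variable {Ω : Type*} [MeasurableSpace Ω] {P : Measure Ω} [IsProbabilityMeasure P]
  {X : ℕ → Ω → ℝ}

omit [IsProbabilityMeasure P] in
lemma aux_pair
    (hindep : iIndepFun X P)
    (hident : ∀ l, IdentDistrib (X l) (X 0) P P)
    {a b : ℕ} (hab : a ≠ b) (f g : ℝ → ℝ) (hf : Measurable f) (hg : Measurable g)
    (hfi : Integrable (fun ω => f (X 0 ω)) P) (hgi : Integrable (fun ω => g (X 0 ω)) P) :
    Integrable (fun ω => f (X a ω) * g (X b ω)) P ∧
      ∫ ω, f (X a ω) * g (X b ω) ∂P = (∫ ω, f (X 0 ω) ∂P) * ∫ ω, g (X 0 ω) ∂P := by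
  have hIa : IdentDistrib (fun ω => f (X a ω)) (fun ω => f (X 0 ω)) P P := (hident a).comp hf
  have hIb : IdentDistrib (fun ω => g (X b ω)) (fun ω => g (X 0 ω)) P P := (hident b).comp hg
  have ha : Integrable (fun ω => f (X a ω)) P := hIa.integrable_iff.mpr hfi
  have hb : Integrable (fun ω => g (X b ω)) P := hIb.integrable_iff.mpr hgi
  have hind : IndepFun (fun ω => f (X a ω)) (fun ω => g (X b ω)) P :=
    (hindep.indepFun hab).comp hf hg
  refine ⟨hind.integrable_mul ha hb, ?_⟩
  have h2 : ∫ ω, f (X a ω) * g (X b ω) ∂P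
      = (∫ ω, f (X a ω) ∂P) * ∫ ω, g (X b ω) ∂P := hind.integral_fun_mul_eq_mul_integral ha.aestronglyMeasurable hb.aestronglyMeasurable
  rw [h2, hIa.integral_eq, hIb.integral_eq]

omit [IsProbabilityMeasure P] in
lemma aux_triple (hmeas : ∀ l, Measurable (X l))
    (hindep : iIndepFun X P)
    (hident : ∀ l, IdentDistrib (X l) (X 0) P P)
    {a b c : ℕ} (hab : a ≠ b) (hac : a ≠ c) (hbc : b ≠ c)
    (f g h : ℝ → ℝ) (hf : Measurable f) (hg : Measurable g) (hh : Measurable h)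
    (hfi : Integrable (fun ω => f (X 0 ω)) P) (hgi : Integrable (fun ω => g (X 0 ω)) P)
    (hhi : Integrable (fun ω => h (X 0 ω)) P) :
    Integrable (fun ω => f (X a ω) * g (X b ω) * h (X c ω)) P ∧
      ∫ ω, f (X a ω) * g (X b ω) * h (X c ω) ∂P
        = (∫ ω, f (X 0 ω) ∂P) * (∫ ω, g (X 0 ω) ∂P) * ∫ ω, h (X 0 ω) ∂P := by
  obtain ⟨hab_int, hab_eq⟩ := aux_pair hindep hident hab f g hf hg hfi hgi
  have hIc : IdentDistrib (fun ω => h (X c ω)) (fun ω => h (X 0 ω)) P P := (hident c).comp hh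
  have hc : Integrable (fun ω => h (X c ω)) P := hIc.integrable_iff.mpr hhi
  have hpair : IndepFun (fun ω => (X a ω, X b ω)) (X c) P :=
    hindep.indepFun_prodMk hmeas a b c hac hbc
  have hind : IndepFun (fun ω => f (X a ω) * g (X b ω)) (fun ω => h (X c ω)) P :=
    hpair.comp ((hf.comp measurable_fst).mul (hg.comp measurable_snd)) hh
  refine ⟨hind.integrable_mul hab_int hc, ?_⟩
  have h1 : ∫ ω, f (X a ω) * g (X b ω) * h (X c ω) ∂P
      = (∫ ω, f (X a ω) * g (X b ω) ∂P) * ∫ ω, h (X c ω) ∂P :=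
    hind.integral_fun_mul_eq_mul_integral hab_int.aestronglyMeasurable hc.aestronglyMeasurable
  rw [h1, hab_eq, hIc.integral_eq]

omit [IsProbabilityMeasure P] in
lemma aux_quad (hmeas : ∀ l, Measurable (X l))
    (hindep : iIndepFun X P)
    (hident : ∀ l, IdentDistrib (X l) (X 0) P P)
    (hmean : ∫ ω, X 0 ω ∂P = 0) (hX1 : Integrable (X 0) P)
    {a b c d : ℕ} (hab : a ≠ b) (hac : a ≠ c) (had : a ≠ d) (hbc : b ≠ c) (hbd : b ≠ d)
    (hcd : c ≠ d) :
    Integrable (fun ω => X a ω * X b ω * (X c ω * X d ω)) P ∧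
      ∫ ω, X a ω * X b ω * (X c ω * X d ω) ∂P = 0 := by
  have hX1' : Integrable (fun ω => X 0 ω) P := hX1
  obtain ⟨hab_int, hab_eq⟩ := aux_pair hindep hident hab (fun x => x) (fun x => x)
    measurable_id measurable_id hX1' hX1'
  obtain ⟨hcd_int, hcd_eq⟩ := aux_pair hindep hident hcd (fun x => x) (fun x => x)
    measurable_id measurable_id hX1' hX1'
  have hpair : IndepFun (fun ω => (X a ω, X b ω)) (fun ω => (X c ω, X d ω)) P :=
    hindep.indepFun_prodMk_prodMk hmeas a b c d hac had hbc hbd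
  have hind : IndepFun (fun ω => X a ω * X b ω) (fun ω => X c ω * X d ω) P :=
    hpair.comp (measurable_fst.mul measurable_snd) (measurable_fst.mul measurable_snd)
  refine ⟨hind.integrable_mul hab_int hcd_int, ?_⟩
  have h1 : ∫ ω, X a ω * X b ω * (X c ω * X d ω) ∂P
      = (∫ ω, X a ω * X b ω ∂P) * ∫ ω, X c ω * X d ω ∂P :=
    hind.integral_fun_mul_eq_mul_integral hab_int.aestronglyMeasurable hcd_int.aestronglyMeasurable
  rw [h1, hab_eq, hcd_eq, hmean]
  ring

end aux

/-- For i.i.d. centered unit-variance random variables with finite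
fourth moment, two orthonormal bases `u`, `e` of `ℝ^m` and positive weights
`λ_j`, the second moment of `∑_j λ_j ((∑_l X_l ⟨u_j,e_l⟩)² − 1)` is bounded by
`(max_j λ_j²)(E[X₁⁴] + 5) m`. -/
theorem statement8
    {Ω : Type*} [MeasurableSpace Ω] (P : Measure Ω) [IsProbabilityMeasure P]
    (X : ℕ → Ω → ℝ) (hmeas : ∀ l, Measurable (X l))
    (hindep : iIndepFun X P)
    (hident : ∀ l, IdentDistrib (X l) (X 0) P P)
    (hmean : ∫ ω, X 0 ω ∂P = 0)
    (hvar : ∫ ω, (X 0 ω) ^ 2 ∂P = 1)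
    (hmom4 : Integrable (fun ω => (X 0 ω) ^ 4) P)
    (m : ℕ) (u e : OrthonormalBasis (Fin m) ℝ (EuclideanSpace ℝ (Fin m)))
    (l : Fin m → ℝ) (hl : ∀ j, 0 < l j) :
    ∫ ω, (∑ j : Fin m, l j *
        ((∑ k : Fin m, X k ω * ⟪u j, e k⟫) ^ 2 - 1)) ^ 2 ∂P
      ≤ (⨆ j : Fin m, (l j) ^ 2) * ((∫ ω, (X 0 ω) ^ 4 ∂P) + 5) * m := by
  classical
  rcases Nat.eq_zero_or_pos m with hm | hm
  · subst hm; simp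
  haveI : Nonempty (Fin m) := ⟨⟨0, hm⟩⟩
  set q := ∫ ω, X 0 ω ^ 4 ∂P with hq
  -- basic integrability of powers of X 0
  have hint : ∀ n : ℕ, n ≤ 4 → Integrable (fun ω => X 0 ω ^ n) P := by
    intro n hn
    refine Integrable.mono' ((integrable_const (1:ℝ)).add hmom4)
      (((hmeas 0).pow_const n).aestronglyMeasurable) (ae_of_all _ fun ω => ?_)
    have h4 : |X 0 ω| ^ 4 = X 0 ω ^ 4 := by
      rw [← abs_pow]; exact abs_of_nonneg (by positivity)
    have hx4 : (0:ℝ) ≤ X 0 ω ^ 4 := by positivity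
    rcases le_or_gt (|X 0 ω|) 1 with h | h
    · have h1 : ‖X 0 ω ^ n‖ ≤ 1 := by
        rw [Real.norm_eq_abs, abs_pow]; exact pow_le_one₀ (abs_nonneg _) h
      simpa using h1.trans (by linarith)
    · have h1 : ‖X 0 ω ^ n‖ ≤ X 0 ω ^ 4 := by
        rw [Real.norm_eq_abs, abs_pow, ← h4]
        exact pow_le_pow_right₀ h.le hn
      simpa using h1.trans (by linarith)
  have hX1 : Integrable (fun ω => X 0 ω) P := by simpa using hint 1 (by norm_num)
  have hX2 : Integrable (fun ω => X 0 ω ^ 2) P := hint 2 (by norm_num)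
  have hX3 : Integrable (fun ω => X 0 ω ^ 3) P := hint 3 (by norm_num)
  have hf21 : Integrable (fun ω => X 0 ω ^ 2 - 1) P := hX2.sub (integrable_const 1)
  have hf31 : Integrable (fun ω => (X 0 ω ^ 2 - 1) * X 0 ω) P := by
    have h : (fun ω => (X 0 ω ^ 2 - 1) * X 0 ω) = fun ω => X 0 ω ^ 3 - X 0 ω := by
      funext ω; ring
    rw [h]; exact hX3.sub hX1
  have hsq4 : Integrable (fun ω => (X 0 ω ^ 2 - 1) ^ 2) P := by
    have h : (fun ω => (X 0 ω ^ 2 - 1) ^ 2) = fun ω => X 0 ω ^ 4 - 2 * X 0 ω ^ 2 + 1 := by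
      funext ω; ring
    rw [h]; exact (hmom4.sub (hX2.const_mul 2)).add (integrable_const 1)
  have h21int : ∫ ω, (X 0 ω ^ 2 - 1) ∂P = 0 := by
    rw [integral_sub hX2 (integrable_const 1), hvar, integral_const]; simp
  have hsqval : ∫ ω, (X 0 ω ^ 2 - 1) ^ 2 ∂P = q - 1 := by
    have h : (fun ω => (X 0 ω ^ 2 - 1) ^ 2) = fun ω => X 0 ω ^ 4 - 2 * X 0 ω ^ 2 + 1 := by
      funext ω; ring
    have hA : Integrable (fun ω => X 0 ω ^ 4 - 2 * X 0 ω ^ 2) P := hmom4.sub (hX2.const_mul 2)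
    have hB : Integrable (fun ω => 2 * X 0 ω ^ 2) P := hX2.const_mul 2
    rw [h, integral_add hA (integrable_const 1), integral_sub hmom4 hB,
      integral_const_mul, hvar, integral_const, ← hq]
    simp; ring
  have hq1 : 1 ≤ q := by
    have h0 : 0 ≤ ∫ ω, (X 0 ω ^ 2 - 1) ^ 2 ∂P := integral_nonneg fun ω => sq_nonneg _
    rw [hsqval] at h0; linarith
  have hne : ∀ {k p : Fin m}, k ≠ p → (k : ℕ) ≠ (p : ℕ) :=
    fun h hval => h (Fin.val_injective hval)
  -- the matrix and the martingale increments
  set Mt : Fin m → Fin m → ℝ := fun k k' => ∑ j, l j * (⟪u j, e k⟫ * ⟪u j, e k'⟫) with hMt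
  set g : Fin m → Fin m → Ω → ℝ := fun k k' ω =>
    if k' = k then Mt k k * (X k ω ^ 2 - 1) else 2 * Mt k k' * (X k ω * X k' ω) with hgdef
  set D : Fin m → Ω → ℝ := fun k ω => ∑ k' ∈ Iic k, g k k' ω with hD
  -- orthonormality
  have hrow : ∀ j j' : Fin m, ∑ k, ⟪u j, e k⟫ * ⟪u j', e k⟫ = if j = j' then 1 else 0 := by
    intro j j'
    have h1 := e.sum_inner_mul_inner (u j) (u j')
    have h2 : ∀ k : Fin m, ⟪u j, e k⟫ * ⟪u j', e k⟫ = ⟪u j, e k⟫ * ⟪e k, u j'⟫ :=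
      fun k => by rw [real_inner_comm (u j') (e k)]
    rw [Finset.sum_congr rfl fun k _ => h2 k, h1]
    exact orthonormal_iff_ite.mp u.orthonormal j j'
  have hcol : ∀ k k' : Fin m, ∑ j, ⟪u j, e k⟫ * ⟪u j, e k'⟫ = if k = k' then 1 else 0 := by
    intro k k'
    have h1 := u.sum_inner_mul_inner (e k) (e k')
    have h2 : ∀ j : Fin m, ⟪u j, e k⟫ * ⟪u j, e k'⟫ = ⟪e k, u j⟫ * ⟪u j, e k'⟫ :=
      fun j => by rw [real_inner_comm (u j) (e k)]
    rw [Finset.sum_congr rfl fun j _ => h2 j, h1]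
    exact orthonormal_iff_ite.mp e.orthonormal k k'
  have hMts : ∀ k k' : Fin m, Mt k k' = Mt k' k :=
    fun k k' => Finset.sum_congr rfl fun j _ => by ring
  have hMtrace : ∑ k, Mt k k = ∑ j, l j := by
    simp only [hMt]
    rw [Finset.sum_comm]
    refine Finset.sum_congr rfl fun j _ => ?_
    rw [← Finset.mul_sum, hrow j j, if_pos rfl, mul_one]
  have hFrob : ∑ k, ∑ k', Mt k k' ^ 2 = ∑ j, l j ^ 2 := by
    have h1 : ∀ k k' : Fin m, Mt k k' ^ 2 = ∑ j, ∑ j',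
        (l j * (⟪u j, e k⟫ * ⟪u j, e k'⟫)) * (l j' * (⟪u j', e k⟫ * ⟪u j', e k'⟫)) := by
      intro k k'; simp only [hMt]; rw [pow_two, Finset.sum_mul_sum]
    calc ∑ k, ∑ k', Mt k k' ^ 2
        = ∑ k, ∑ k', ∑ j, ∑ j',
            (l j * (⟪u j, e k⟫ * ⟪u j, e k'⟫)) * (l j' * (⟪u j', e k⟫ * ⟪u j', e k'⟫)) := by
          exact Finset.sum_congr rfl fun k _ => Finset.sum_congr rfl fun k' _ => h1 k k'
      _ = ∑ j, ∑ j', ∑ k, ∑ k',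
            (l j * (⟪u j, e k⟫ * ⟪u j, e k'⟫)) * (l j' * (⟪u j', e k⟫ * ⟪u j', e k'⟫)) :=
          sum_swap4 _
      _ = ∑ j, ∑ j', (l j * l j') *
            ((∑ k, ⟪u j, e k⟫ * ⟪u j', e k⟫) * (∑ k', ⟪u j, e k'⟫ * ⟪u j', e k'⟫)) := by
          refine Finset.sum_congr rfl fun j _ => Finset.sum_congr rfl fun j' _ => ?_
          rw [Finset.sum_mul_sum (f := fun k => ⟪u j, e k⟫ * ⟪u j', e k⟫)
            (g := fun k' => ⟪u j, e k'⟫ * ⟪u j', e k'⟫), Finset.mul_sum]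
          refine Finset.sum_congr rfl fun k _ => ?_
          rw [Finset.mul_sum]
          refine Finset.sum_congr rfl fun k' _ => by ring
      _ = ∑ j, l j ^ 2 := by
          refine Finset.sum_congr rfl fun j _ => ?_
          have h2 : ∀ j' : Fin m, (l j * l j') *
              ((∑ k, ⟪u j, e k⟫ * ⟪u j', e k⟫) * (∑ k', ⟪u j, e k'⟫ * ⟪u j', e k'⟫))
              = if j = j' then l j * l j' else 0 := by
            intro j'
            rw [hrow j j']
            by_cases h : j = j' <;> simp [h]
          rw [Finset.sum_congr rfl fun j' _ => h2 j', Finset.sum_ite_eq]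
          simp [pow_two]
  -- pointwise identity
  have hTid : ∀ ω, (∑ j : Fin m, l j * ((∑ k : Fin m, X k ω * ⟪u j, e k⟫) ^ 2 - 1))
      = ∑ k, D k ω := by
    intro ω
    have e1 : ∀ j : Fin m, (∑ k : Fin m, X k ω * ⟪u j, e k⟫) ^ 2
        = ∑ k : Fin m, ∑ k' : Fin m, (X k ω * ⟪u j, e k⟫) * (X k' ω * ⟪u j, e k'⟫) := fun j => by
      rw [pow_two, Finset.sum_mul_sum]
    calc ∑ j : Fin m, l j * ((∑ k : Fin m, X k ω * ⟪u j, e k⟫) ^ 2 - 1)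
        = (∑ j, ∑ k : Fin m, ∑ k' : Fin m, l j * ((X k ω * ⟪u j, e k⟫) * (X k' ω * ⟪u j, e k'⟫)))
            - ∑ j, l j := by
          rw [← Finset.sum_sub_distrib]
          refine Finset.sum_congr rfl fun j _ => ?_
          rw [mul_sub, mul_one, e1 j, Finset.mul_sum]
          congr 1
          exact Finset.sum_congr rfl fun k _ => Finset.mul_sum _ _ _
      _ = (∑ k : Fin m, ∑ k' : Fin m, Mt k k' * (X k ω * X k' ω)) - ∑ k : Fin m, Mt k k := by
          rw [hMtrace]
          congr 1
          rw [sum_swap3 (fun j k k' => l j * ((X k ω * ⟪u j, e k⟫) * (X k' ω * ⟪u j, e k'⟫)))]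
          refine Finset.sum_congr rfl fun k _ => Finset.sum_congr rfl fun k' _ => ?_
          simp only [hMt]
          rw [Finset.sum_mul]
          exact Finset.sum_congr rfl fun j _ => by ring
      _ = (∑ k : Fin m, (∑ k' ∈ Iic k, Mt k k' * (X k ω * X k' ω)
            + ∑ k' ∈ Ioi k, Mt k k' * (X k ω * X k' ω))) - ∑ k : Fin m, Mt k k := by
          congr 1
          exact Finset.sum_congr rfl fun k _ => sum_split_Iic k _
      _ = (∑ k : Fin m, ∑ k' ∈ Iic k, Mt k k' * (X k ω * X k' ω))
            + (∑ k : Fin m, ∑ k' ∈ Iio k, Mt k k' * (X k ω * X k' ω)) - ∑ k : Fin m, Mt k k := by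
          rw [Finset.sum_add_distrib]
          congr 2
          rw [sum_Ioi_swap (fun k k' => Mt k k' * (X k ω * X k' ω))]
          exact Finset.sum_congr rfl fun k _ => Finset.sum_congr rfl fun k' _ => by
            rw [hMts k' k]; ring
      _ = ∑ k, D k ω := by
          rw [← Finset.sum_add_distrib, ← Finset.sum_sub_distrib]
          refine Finset.sum_congr rfl fun k _ => ?_
          simp only [hD, hgdef]
          rw [← Finset.Iio_insert k, Finset.sum_insert (by simp), Finset.sum_insert (by simp)]
          rw [if_pos rfl]
          rw [Finset.sum_congr rfl fun k' hk' => if_neg (ne_of_lt (mem_Iio.mp hk'))]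
          have h3 : ∑ k' ∈ Iio k, 2 * Mt k k' * (X k ω * X k' ω)
              = (∑ k' ∈ Iio k, Mt k k' * (X k ω * X k' ω))
                + ∑ k' ∈ Iio k, Mt k k' * (X k ω * X k' ω) := by
            rw [← Finset.sum_add_distrib]
            exact Finset.sum_congr rfl fun k' _ => by ring
          rw [h3]; ring
  -- integrability and integral values of products of increments
  have hgkk : ∀ (a : Fin m) (ω : Ω), g a a ω = Mt a a * (X a ω ^ 2 - 1) :=
    fun a ω => by simp [hgdef]
  have hgkk' : ∀ (a b : Fin m), b ≠ a → ∀ ω, g a b ω = 2 * Mt a b * (X a ω * X b ω) :=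
    fun a b hba ω => by simp [hgdef, hba]
  have m21 : Measurable (fun x : ℝ => x ^ 2 - 1) :=
    (measurable_id.pow_const 2).sub measurable_const
  have m31 : Measurable (fun x : ℝ => (x ^ 2 - 1) * x) := m21.mul measurable_id
  have msq : Measurable (fun x : ℝ => x ^ 2) := measurable_id.pow_const 2
  have mid : Measurable (fun x : ℝ => x) := measurable_id
  have hterm_lt : ∀ k p k' p' : Fin m, k' ≤ k → p' ≤ p → k < p →
      Integrable (fun ω => g k k' ω * g p p' ω) P ∧ ∫ ω, g k k' ω * g p p' ω ∂P = 0 := by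
    intro k p k' p' hk'le hp'le hkp
    have hkpne : k ≠ p := ne_of_lt hkp
    have hkpN : (k : ℕ) ≠ p := hne hkpne
    by_cases h1 : k' = k
    · by_cases h2 : p' = p
      · -- (X_k²-1)(X_p²-1)
        have hre : (fun ω => g k k' ω * g p p' ω)
            = fun ω => (Mt k k * Mt p p) * ((X k ω ^ 2 - 1) * (X p ω ^ 2 - 1)) := by
          funext ω; rw [h1, h2, hgkk, hgkk]; ring
        obtain ⟨hi, hv⟩ := aux_pair hindep hident hkpN (fun x => x ^ 2 - 1) (fun x => x ^ 2 - 1)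
          m21 m21 hf21 hf21
        have hi' : Integrable (fun ω => (X k ω ^ 2 - 1) * (X p ω ^ 2 - 1)) P := hi
        have hv' : ∫ ω, (X k ω ^ 2 - 1) * (X p ω ^ 2 - 1) ∂P
            = (∫ ω, X 0 ω ^ 2 - 1 ∂P) * ∫ ω, X 0 ω ^ 2 - 1 ∂P := hv
        exact ⟨hre ▸ hi'.const_mul _, by rw [hre, integral_const_mul, hv', h21int]; ring⟩
      · have hp'lt : p' < p := lt_of_le_of_ne hp'le h2
        by_cases h3 : p' = k
        · -- ((X_k²-1)X_k) · X_p
          have hre : (fun ω => g k k' ω * g p p' ω)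
              = fun ω => (Mt k k * (2 * Mt p k)) * ((X k ω ^ 2 - 1) * X k ω * X p ω) := by
            funext ω; rw [h3, h1, hgkk, hgkk' p k hkpne]; ring
          obtain ⟨hi, hv⟩ := aux_pair hindep hident hkpN (fun x => (x ^ 2 - 1) * x)
            (fun x => x) m31 mid hf31 hX1
          have hi' : Integrable (fun ω => (X k ω ^ 2 - 1) * X k ω * X p ω) P := hi
          have hv' : ∫ ω, (X k ω ^ 2 - 1) * X k ω * X p ω ∂P
              = (∫ ω, (X 0 ω ^ 2 - 1) * X 0 ω ∂P) * ∫ ω, X 0 ω ∂P := hv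
          exact ⟨hre ▸ hi'.const_mul _, by rw [hre, integral_const_mul, hv', hmean]; ring⟩
        · -- (X_k²-1) · X_p · X_p'
          have hre : (fun ω => g k k' ω * g p p' ω)
              = fun ω => (Mt k k * (2 * Mt p p')) * ((X k ω ^ 2 - 1) * X p ω * X p' ω) := by
            funext ω; rw [h1, hgkk, hgkk' p p' h2]; ring
          obtain ⟨hi, hv⟩ := aux_triple hmeas hindep hident hkpN (hne (Ne.symm h3))
            (hne (Ne.symm (ne_of_lt hp'lt))) (fun x => x ^ 2 - 1) (fun x => x) (fun x => x)
            m21 mid mid hf21 hX1 hX1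
          have hi' : Integrable (fun ω => (X k ω ^ 2 - 1) * X p ω * X p' ω) P := hi
          have hv' : ∫ ω, (X k ω ^ 2 - 1) * X p ω * X p' ω ∂P
              = (∫ ω, X 0 ω ^ 2 - 1 ∂P) * (∫ ω, X 0 ω ∂P) * ∫ ω, X 0 ω ∂P := hv
          exact ⟨hre ▸ hi'.const_mul _, by rw [hre, integral_const_mul, hv', hmean]; ring⟩
    · have hk'lt : k' < k := lt_of_le_of_ne hk'le h1
      have hk'p : k' < p := hk'lt.trans hkp
      have hkk'N : (k : ℕ) ≠ k' := hne (Ne.symm (ne_of_lt hk'lt))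
      by_cases h2 : p' = p
      · -- (X_p²-1) · X_k · X_k'
        have hre : (fun ω => g k k' ω * g p p' ω)
            = fun ω => ((2 * Mt k k') * Mt p p) * ((X p ω ^ 2 - 1) * X k ω * X k' ω) := by
          funext ω; rw [h2, hgkk' k k' h1, hgkk]; ring
        obtain ⟨hi, hv⟩ := aux_triple hmeas hindep hident (hne hkpne.symm)
          (hne (Ne.symm (ne_of_lt hk'p))) hkk'N (fun x => x ^ 2 - 1) (fun x => x) (fun x => x)
          m21 mid mid hf21 hX1 hX1
        have hi' : Integrable (fun ω => (X p ω ^ 2 - 1) * X k ω * X k' ω) P := hi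
        have hv' : ∫ ω, (X p ω ^ 2 - 1) * X k ω * X k' ω ∂P
            = (∫ ω, X 0 ω ^ 2 - 1 ∂P) * (∫ ω, X 0 ω ∂P) * ∫ ω, X 0 ω ∂P := hv
        exact ⟨hre ▸ hi'.const_mul _, by rw [hre, integral_const_mul, hv', hmean]; ring⟩
      · have hp'lt : p' < p := lt_of_le_of_ne hp'le h2
        by_cases h3 : p' = k
        · -- X_k² · X_k' · X_p
          have hre : (fun ω => g k k' ω * g p p' ω)
              = fun ω => ((2 * Mt k k') * (2 * Mt p k)) * (X k ω ^ 2 * X k' ω * X p ω) := by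
            funext ω; rw [h3, hgkk' k k' h1, hgkk' p k hkpne]; ring
          obtain ⟨hi, hv⟩ := aux_triple hmeas hindep hident hkk'N hkpN (hne (ne_of_lt hk'p))
            (fun x => x ^ 2) (fun x => x) (fun x => x) msq mid mid hX2 hX1 hX1
          have hi' : Integrable (fun ω => X k ω ^ 2 * X k' ω * X p ω) P := hi
          have hv' : ∫ ω, X k ω ^ 2 * X k' ω * X p ω ∂P
              = (∫ ω, X 0 ω ^ 2 ∂P) * (∫ ω, X 0 ω ∂P) * ∫ ω, X 0 ω ∂P := hv
          exact ⟨hre ▸ hi'.const_mul _, by rw [hre, integral_const_mul, hv', hmean]; ring⟩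
        · by_cases h4 : p' = k'
          · -- X_k'² · X_k · X_p
            have hre : (fun ω => g k k' ω * g p p' ω)
                = fun ω => ((2 * Mt k k') * (2 * Mt p k')) * (X k' ω ^ 2 * X k ω * X p ω) := by
              funext ω; rw [h4, hgkk' k k' h1, hgkk' p k' (ne_of_lt hk'p)]; ring
            obtain ⟨hi, hv⟩ := aux_triple hmeas hindep hident (hne (ne_of_lt hk'lt))
              (hne (ne_of_lt hk'p)) hkpN (fun x => x ^ 2) (fun x => x) (fun x => x)
              msq mid mid hX2 hX1 hX1
            have hi' : Integrable (fun ω => X k' ω ^ 2 * X k ω * X p ω) P := hi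
            have hv' : ∫ ω, X k' ω ^ 2 * X k ω * X p ω ∂P
                = (∫ ω, X 0 ω ^ 2 ∂P) * (∫ ω, X 0 ω ∂P) * ∫ ω, X 0 ω ∂P := hv
            exact ⟨hre ▸ hi'.const_mul _, by rw [hre, integral_const_mul, hv', hmean]; ring⟩
          · -- all four distinct
            have hre : (fun ω => g k k' ω * g p p' ω)
                = fun ω => ((2 * Mt k k') * (2 * Mt p p'))
                  * (X k ω * X k' ω * (X p ω * X p' ω)) := by
              funext ω; rw [hgkk' k k' h1, hgkk' p p' h2]; ring
            obtain ⟨hi, hv⟩ := aux_quad hmeas hindep hident hmean hX1 hkk'N hkpN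
              (hne (Ne.symm h3)) (hne (ne_of_lt hk'p)) (hne (Ne.symm h4))
              (hne (Ne.symm (ne_of_lt hp'lt)))
            have hi' : Integrable (fun ω => X k ω * X k' ω * (X p ω * X p' ω)) P := hi
            have hv' : ∫ ω, X k ω * X k' ω * (X p ω * X p' ω) ∂P = 0 := hv
            exact ⟨hre ▸ hi'.const_mul _, by rw [hre, integral_const_mul, hv']; ring⟩
  have hdiag : ∀ k k' p' : Fin m, k' ≤ k → p' ≤ k →
      Integrable (fun ω => g k k' ω * g k p' ω) P ∧
      ∫ ω, g k k' ω * g k p' ω ∂P =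
        if k' = k ∧ p' = k then Mt k k ^ 2 * (q - 1)
        else if k' = p' then 4 * Mt k k' ^ 2 else 0 := by
    intro k k' p' hk'le hp'le
    by_cases h1 : k' = k
    · by_cases h2 : p' = k
      · -- (X_k²-1)²
        have hre : (fun ω => g k k' ω * g k p' ω)
            = fun ω => Mt k k ^ 2 * ((X k ω ^ 2 - 1) ^ 2) := by
          funext ω; rw [h1, h2, hgkk]; ring
        have hid4 : IdentDistrib (fun ω => (X k ω ^ 2 - 1) ^ 2)
            (fun ω => (X 0 ω ^ 2 - 1) ^ 2) P P := (hident k).comp (m21.pow_const 2)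
        have hi' : Integrable (fun ω => (X k ω ^ 2 - 1) ^ 2) P :=
          hid4.integrable_iff.mpr hsq4
        refine ⟨hre ▸ hi'.const_mul _, ?_⟩
        rw [hre, integral_const_mul, hid4.integral_eq, hsqval, if_pos ⟨h1, h2⟩]
      · -- ((X_k²-1)X_k) · X_p'
        have hp'lt : p' < k := lt_of_le_of_ne hp'le h2
        have hre : (fun ω => g k k' ω * g k p' ω)
            = fun ω => (Mt k k * (2 * Mt k p')) * ((X k ω ^ 2 - 1) * X k ω * X p' ω) := by
          funext ω; rw [h1, hgkk, hgkk' k p' h2]; ring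
        obtain ⟨hi, hv⟩ := aux_pair hindep hident (hne (fun hh => h2 hh.symm))
          (fun x => (x ^ 2 - 1) * x) (fun x => x) m31 mid hf31 hX1
        have hi' : Integrable (fun ω => (X k ω ^ 2 - 1) * X k ω * X p' ω) P := hi
        have hv' : ∫ ω, (X k ω ^ 2 - 1) * X k ω * X p' ω ∂P
            = (∫ ω, (X 0 ω ^ 2 - 1) * X 0 ω ∂P) * ∫ ω, X 0 ω ∂P := hv
        refine ⟨hre ▸ hi'.const_mul _, ?_⟩
        rw [hre, integral_const_mul, hv', hmean,
          if_neg (fun hc => h2 hc.2), if_neg (fun hh => h2 (hh.symm.trans h1))]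
        ring
    · have hk'lt : k' < k := lt_of_le_of_ne hk'le h1
      by_cases h2 : p' = k
      · -- ((X_k²-1)X_k) · X_k'
        have hre : (fun ω => g k k' ω * g k p' ω)
            = fun ω => ((2 * Mt k k') * Mt k k) * ((X k ω ^ 2 - 1) * X k ω * X k' ω) := by
          funext ω; rw [h2, hgkk' k k' h1, hgkk]; ring
        obtain ⟨hi, hv⟩ := aux_pair hindep hident (hne (fun hh => h1 hh.symm))
          (fun x => (x ^ 2 - 1) * x) (fun x => x) m31 mid hf31 hX1
        have hi' : Integrable (fun ω => (X k ω ^ 2 - 1) * X k ω * X k' ω) P := hi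
        have hv' : ∫ ω, (X k ω ^ 2 - 1) * X k ω * X k' ω ∂P
            = (∫ ω, (X 0 ω ^ 2 - 1) * X 0 ω ∂P) * ∫ ω, X 0 ω ∂P := hv
        refine ⟨hre ▸ hi'.const_mul _, ?_⟩
        rw [hre, integral_const_mul, hv', hmean,
          if_neg (fun hc => h1 hc.1), if_neg (fun hh => h1 (hh.trans h2))]
        ring
      · have hp'lt : p' < k := lt_of_le_of_ne hp'le h2
        by_cases h3 : k' = p'
        · -- X_k² · X_k'²
          have hre : (fun ω => g k k' ω * g k p' ω)
              = fun ω => ((2 * Mt k k') * (2 * Mt k k')) * (X k ω ^ 2 * X k' ω ^ 2) := by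
            funext ω; rw [← h3, hgkk' k k' h1]; ring
          obtain ⟨hi, hv⟩ := aux_pair hindep hident (hne (fun hh => h1 hh.symm))
            (fun x => x ^ 2) (fun x => x ^ 2) msq msq hX2 hX2
          have hi' : Integrable (fun ω => X k ω ^ 2 * X k' ω ^ 2) P := hi
          have hv' : ∫ ω, X k ω ^ 2 * X k' ω ^ 2 ∂P
              = (∫ ω, X 0 ω ^ 2 ∂P) * ∫ ω, X 0 ω ^ 2 ∂P := hv
          refine ⟨hre ▸ hi'.const_mul _, ?_⟩
          rw [hre, integral_const_mul, hv', hvar, if_neg (fun hc => h1 hc.1), if_pos h3]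
          ring
        · -- X_k² · X_k' · X_p'
          have hre : (fun ω => g k k' ω * g k p' ω)
              = fun ω => ((2 * Mt k k') * (2 * Mt k p')) * (X k ω ^ 2 * X k' ω * X p' ω) := by
            funext ω; rw [hgkk' k k' h1, hgkk' k p' h2]; ring
          obtain ⟨hi, hv⟩ := aux_triple hmeas hindep hident (hne (fun hh => h1 hh.symm))
            (hne (fun hh => h2 hh.symm)) (hne h3) (fun x => x ^ 2) (fun x => x) (fun x => x)
            msq mid mid hX2 hX1 hX1
          have hi' : Integrable (fun ω => X k ω ^ 2 * X k' ω * X p' ω) P := hi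
          have hv' : ∫ ω, X k ω ^ 2 * X k' ω * X p' ω ∂P
              = (∫ ω, X 0 ω ^ 2 ∂P) * (∫ ω, X 0 ω ∂P) * ∫ ω, X 0 ω ∂P := hv
          refine ⟨hre ▸ hi'.const_mul _, ?_⟩
          rw [hre, integral_const_mul, hv', hmean, if_neg (fun hc => h1 hc.1), if_neg h3]
          ring
  have hg_int : ∀ k p k' p' : Fin m, k' ≤ k → p' ≤ p →
      Integrable (fun ω => g k k' ω * g p p' ω) P := by
    intro k p k' p' hk' hp'
    rcases lt_trichotomy k p with h | h | h
    · exact (hterm_lt k p k' p' hk' hp' h).1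
    · subst h; exact (hdiag k k' p' hk' hp').1
    · have h1 := (hterm_lt p k p' k' hp' hk' h).1
      have hcomm : (fun ω => g k k' ω * g p p' ω) = fun ω => g p p' ω * g k k' ω := by
        funext ω; ring
      rw [hcomm]; exact h1
  have hDDexp : ∀ k p : Fin m, (fun ω => D k ω * D p ω)
      = fun ω => ∑ k' ∈ Iic k, ∑ p' ∈ Iic p, g k k' ω * g p p' ω := by
    intro k p; funext ω; simp only [hD]; rw [Finset.sum_mul_sum]
  have hDD_int : ∀ k p : Fin m, Integrable (fun ω => D k ω * D p ω) P := by
    intro k p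
    rw [hDDexp k p]
    exact integrable_finset_sum _ fun k' hk' => integrable_finset_sum _ fun p' hp' =>
      hg_int k p k' p' (mem_Iic.mp hk') (mem_Iic.mp hp')
  have hDDval : ∀ k p : Fin m, ∫ ω, D k ω * D p ω ∂P
      = ∑ k' ∈ Iic k, ∑ p' ∈ Iic p, ∫ ω, g k k' ω * g p p' ω ∂P := by
    intro k p
    rw [hDDexp k p, integral_finset_sum _ fun k' hk' => integrable_finset_sum _ fun p' hp' =>
      hg_int k p k' p' (mem_Iic.mp hk') (mem_Iic.mp hp')]
    exact Finset.sum_congr rfl fun k' hk' => integral_finset_sum _ fun p' hp' =>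
      hg_int k p k' p' (mem_Iic.mp hk') (mem_Iic.mp hp')
  have hcross : ∀ k p : Fin m, k ≠ p → ∫ ω, D k ω * D p ω ∂P = 0 := by
    intro k p hkp
    rw [hDDval k p]
    refine Finset.sum_eq_zero fun k' hk' => Finset.sum_eq_zero fun p' hp' => ?_
    rcases lt_or_gt_of_ne hkp with h | h
    · exact (hterm_lt k p k' p' (mem_Iic.mp hk') (mem_Iic.mp hp') h).2
    · have h1 := (hterm_lt p k p' k' (mem_Iic.mp hp') (mem_Iic.mp hk') h).2
      have hcomm : (fun ω => g k k' ω * g p p' ω) = fun ω => g p p' ω * g k k' ω := by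
        funext ω; ring
      rw [hcomm]; exact h1
  have hDsq : ∀ k : Fin m, ∫ ω, D k ω * D k ω ∂P
      = Mt k k ^ 2 * (q - 1) + ∑ k' ∈ Iio k, 4 * Mt k k' ^ 2 := by
    intro k
    rw [hDDval k k]
    rw [Finset.sum_congr rfl fun k' hk' => Finset.sum_congr rfl fun p' hp' =>
      (hdiag k k' p' (mem_Iic.mp hk') (mem_Iic.mp hp')).2]
    rw [← Finset.Iio_insert k, Finset.sum_insert (by simp)]
    congr 1
    · rw [Finset.sum_eq_single_of_mem k (by simp) ?side]
      · simp
      case side =>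
        intro p' _ hp'
        rw [if_neg (by simp [hp']), if_neg (Ne.symm hp')]
    · refine Finset.sum_congr rfl fun k' hk' => ?_
      have hk'lt : k' < k := mem_Iio.mp hk'
      rw [Finset.sum_eq_single_of_mem k' (by simp [hk'lt.le]) ?side2]
      · rw [if_neg (by simp [hk'lt.ne]), if_pos rfl]
      case side2 =>
        intro p' _ hp'
        rw [if_neg (by simp [hk'lt.ne]), if_neg (Ne.symm hp')]
  -- the final bound
  obtain ⟨j0, hj0⟩ := Finite.exists_max l
  have hbdd : BddAbove (Set.range fun j : Fin m => l j ^ 2) :=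
    Set.Finite.bddAbove (Set.finite_range _)
  have hsup : ∀ j, l j ^ 2 ≤ ⨆ j : Fin m, l j ^ 2 := fun j => le_ciSup hbdd j
  have hsup0 : 0 ≤ ⨆ j : Fin m, l j ^ 2 := le_trans (sq_nonneg (l j0)) (hsup j0)
  have hMkk : ∀ k, Mt k k ^ 2 ≤ ⨆ j : Fin m, l j ^ 2 := by
    intro k
    have h0 : 0 ≤ Mt k k :=
      Finset.sum_nonneg fun j _ => mul_nonneg (hl j).le (mul_self_nonneg _)
    have h1 : Mt k k ≤ l j0 := by
      calc Mt k k ≤ ∑ j, l j0 * (⟪u j, e k⟫ * ⟪u j, e k⟫) :=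
            Finset.sum_le_sum fun j _ =>
              mul_le_mul_of_nonneg_right (hj0 j) (mul_self_nonneg _)
        _ = l j0 * ∑ j, ⟪u j, e k⟫ * ⟪u j, e k⟫ := (Finset.mul_sum _ _ _).symm
        _ = l j0 := by rw [hcol k k, if_pos rfl, mul_one]
    calc Mt k k ^ 2 ≤ l j0 ^ 2 := pow_le_pow_left₀ h0 h1 2
      _ ≤ _ := hsup j0
  have hsum_l : ∑ j, l j ^ 2 ≤ (m : ℝ) * ⨆ j : Fin m, l j ^ 2 := by
    calc ∑ j, l j ^ 2 ≤ ∑ _j : Fin m, ⨆ j : Fin m, l j ^ 2 :=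
          Finset.sum_le_sum fun j _ => hsup j
      _ = (m : ℝ) * ⨆ j : Fin m, l j ^ 2 := by
          rw [Finset.sum_const, card_univ, Fintype.card_fin, nsmul_eq_mul]
  have hIio2 : (∑ k, ∑ k' ∈ Iio k, Mt k k' ^ 2) + (∑ k, ∑ k' ∈ Iio k, Mt k k' ^ 2)
      ≤ ∑ j, l j ^ 2 := by
    rw [← hFrob]
    have hswap : ∑ k, ∑ k' ∈ Ioi k, Mt k k' ^ 2 = ∑ k, ∑ k' ∈ Iio k, Mt k k' ^ 2 := by
      rw [sum_Ioi_swap (fun k k' => Mt k k' ^ 2)]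
      exact Finset.sum_congr rfl fun k _ => Finset.sum_congr rfl fun k' _ => by rw [hMts]
    calc (∑ k, ∑ k' ∈ Iio k, Mt k k' ^ 2) + (∑ k, ∑ k' ∈ Iio k, Mt k k' ^ 2)
        = (∑ k, ∑ k' ∈ Iio k, Mt k k' ^ 2) + (∑ k, ∑ k' ∈ Ioi k, Mt k k' ^ 2) := by
          rw [hswap]
      _ ≤ ∑ k, ∑ k', Mt k k' ^ 2 := by
          rw [← Finset.sum_add_distrib]
          refine Finset.sum_le_sum fun k _ => ?_
          rw [sum_split_Iic k (fun k' => Mt k k' ^ 2)]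
          have hsub : ∑ k' ∈ Iio k, Mt k k' ^ 2 ≤ ∑ k' ∈ Iic k, Mt k k' ^ 2 :=
            Finset.sum_le_sum_of_subset_of_nonneg Finset.Iio_subset_Iic_self
              (fun i _ _ => sq_nonneg (Mt k i))
          linarith
  calc ∫ ω, (∑ j : Fin m, l j * ((∑ k : Fin m, X k ω * ⟪u j, e k⟫) ^ 2 - 1)) ^ 2 ∂P
      = ∫ ω, ∑ k, ∑ p, D k ω * D p ω ∂P := by
        have h1 : (fun ω => (∑ j : Fin m, l j * ((∑ k : Fin m, X k ω * ⟪u j, e k⟫) ^ 2 - 1)) ^ 2)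
            = fun ω => ∑ k, ∑ p, D k ω * D p ω := by
          funext ω; rw [hTid ω, pow_two, Finset.sum_mul_sum]
        rw [h1]
    _ = ∑ k, ∑ p, ∫ ω, D k ω * D p ω ∂P := by
        rw [integral_finset_sum _ fun k _ => integrable_finset_sum _ fun p _ => hDD_int k p]
        exact Finset.sum_congr rfl fun k _ => integral_finset_sum _ fun p _ => hDD_int k p
    _ = ∑ k, ∫ ω, D k ω * D k ω ∂P := by
        refine Finset.sum_congr rfl fun k _ => ?_
        rw [Finset.sum_eq_single_of_mem k (mem_univ k) fun p _ hpk => hcross k p (Ne.symm hpk)]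
    _ = ∑ k, (Mt k k ^ 2 * (q - 1) + ∑ k' ∈ Iio k, 4 * Mt k k' ^ 2) :=
        Finset.sum_congr rfl fun k _ => hDsq k
    _ ≤ (m : ℝ) * ((⨆ j : Fin m, l j ^ 2) * (q - 1)) + 2 * ∑ j, l j ^ 2 := by
        rw [Finset.sum_add_distrib]
        have hA : ∑ k, Mt k k ^ 2 * (q - 1) ≤ (m : ℝ) * ((⨆ j : Fin m, l j ^ 2) * (q - 1)) := by
          calc ∑ k, Mt k k ^ 2 * (q - 1)
              ≤ ∑ _k : Fin m, (⨆ j : Fin m, l j ^ 2) * (q - 1) :=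
                Finset.sum_le_sum fun k _ =>
                  mul_le_mul_of_nonneg_right (hMkk k) (by linarith)
            _ = (m : ℝ) * ((⨆ j : Fin m, l j ^ 2) * (q - 1)) := by
                rw [Finset.sum_const, card_univ, Fintype.card_fin, nsmul_eq_mul]
        have hB : ∑ k, ∑ k' ∈ Iio k, 4 * Mt k k' ^ 2 ≤ 2 * ∑ j, l j ^ 2 := by
          have h4 : ∑ k, ∑ k' ∈ Iio k, 4 * Mt k k' ^ 2
              = 4 * ∑ k, ∑ k' ∈ Iio k, Mt k k' ^ 2 := by
            rw [Finset.mul_sum]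
            exact Finset.sum_congr rfl fun k _ => (Finset.mul_sum _ _ _).symm
          rw [h4]; linarith [hIio2]
        linarith
    _ ≤ (⨆ j : Fin m, l j ^ 2) * (q + 5) * m := by
        have hm0 : (0:ℝ) ≤ (m : ℝ) := Nat.cast_nonneg m
        nlinarith [hsum_l, mul_nonneg hm0 hsup0]
end

section
/- Let m, n ∈ ℕ with n ≥ 1, and let (δ_{il})_{i≤n, l≤m} be i.i.d. centered random variables with variance σ² > 0. Let P : Y_m → ℝ^m be a linear isomorphism of an m-dimensional space onto ℝ^m with singular values σ_1,…,σ_m > 0. Then E ‖ P^+ δ̄ ‖² = (σ²/n) ∑_{j=1}^m σ_j^{-2}, where δ̄ ∈ ℝ^m has components δ̄_l = (1/n) ∑_{i=1}^n δ_{il}. -/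
open MeasureTheory ProbabilityTheory
open RealInnerProductSpace

/-- For i.i.d. centered errors `δ_{il}` of variance `v` and a
linear isomorphism `P` of an `m`-dimensional inner product space onto `ℝ^m`
with singular values `σ_j` (i.e. `P P* u_j = σ_j² u_j` for an orthonormal basis
`u`), the averaged noise `δ̄_l = (1/n) ∑_i δ_{il}` satisfies
`E‖P⁺ δ̄‖² = (v/n) ∑_j σ_j⁻²` (for invertible `P`, `P⁺ = P⁻¹`). -/
theorem statement9
    {Ω : Type*} [MeasurableSpace Ω] (Q : Measure Ω) [IsProbabilityMeasure Q]
    {Ym : Type*} [NormedAddCommGroup Ym] [InnerProductSpace ℝ Ym]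
    [FiniteDimensional ℝ Ym]
    (m n : ℕ) (hn : 1 ≤ n) (hdim : Module.finrank ℝ Ym = m)
    (P : Ym ≃L[ℝ] EuclideanSpace ℝ (Fin m))
    (σ : Fin m → ℝ) (hσ : ∀ j, 0 < σ j)
    (u : OrthonormalBasis (Fin m) ℝ (EuclideanSpace ℝ (Fin m)))
    (hsv : ∀ j, (P : Ym →L[ℝ] EuclideanSpace ℝ (Fin m))
        ((ContinuousLinearMap.adjoint (P : Ym →L[ℝ] EuclideanSpace ℝ (Fin m))) (u j))
      = (σ j) ^ 2 • u j)
    (v : ℝ) (hv : 0 < v)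
    (δ : Fin n × Fin m → Ω → ℝ) (hmeas : ∀ p, Measurable (δ p))
    (hindep : iIndepFun δ Q)
    (hident : ∀ p q, IdentDistrib (δ p) (δ q) Q Q)
    (hmean : ∀ p, ∫ ω, δ p ω ∂Q = 0)
    (hvar : ∀ p, ∫ ω, (δ p ω) ^ 2 ∂Q = v) :
    ∫ ω, ‖P.symm (show EuclideanSpace ℝ (Fin m) from
        WithLp.toLp 2 fun l => (∑ i : Fin n, δ (i, l) ω) / n)‖ ^ 2 ∂Q
      = (v / n) * ∑ j : Fin m, ((σ j) ^ 2)⁻¹ := by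
  classical
  have hn0 : (n : ℝ) ≠ 0 := Nat.cast_ne_zero.2 (by omega)
  set T : Ym →L[ℝ] EuclideanSpace ℝ (Fin m) := (P : Ym →L[ℝ] EuclideanSpace ℝ (Fin m)) with hT
  -- integrability facts
  have hL2 : ∀ p, Integrable (fun ω => δ p ω ^ 2) Q := by
    intro p
    by_contra h
    have := hvar p
    rw [integral_undef h] at this
    exact hv.ne' this.symm
  have hM2 : ∀ p, MemLp (δ p) 2 Q := fun p =>
    (memLp_two_iff_integrable_sq (hmeas p).aestronglyMeasurable).2 (hL2 p)
  have hL1 : ∀ p, Integrable (δ p) Q := fun p => (hM2 p).integrable one_le_two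
  have hprodint : ∀ p q, Integrable (fun ω => δ p ω * δ q ω) Q := by
    intro p q
    by_cases hpq : p = q
    · subst hpq; simpa [sq] using hL2 p
    · exact (hindep.indepFun hpq).integrable_mul (hL1 p) (hL1 q)
  have hprod : ∀ p q, ∫ ω, δ p ω * δ q ω ∂Q = if p = q then v else 0 := by
    intro p q
    by_cases hpq : p = q
    · subst hpq; rw [if_pos rfl, ← hvar p]; simp_rw [sq]
    · rw [if_neg hpq]
      have := (hindep.indepFun hpq).integral_mul_eq_mul_integral (hL1 p).1 (hL1 q).1
      simpa [Pi.mul_apply, hmean p] using this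
  -- the key second moment of S j
  have key : ∀ j : Fin m,
      ∫ ω, (∑ p : Fin n × Fin m, u j p.2 * δ p ω) ^ 2 ∂Q = v * n := by
    intro j
    have expand : ∀ ω, (∑ p : Fin n × Fin m, u j p.2 * δ p ω) ^ 2
        = ∑ p : Fin n × Fin m, ∑ q : Fin n × Fin m,
            (u j p.2 * u j q.2) * (δ p ω * δ q ω) := by
      intro ω
      rw [sq, Finset.sum_mul_sum]
      refine Finset.sum_congr rfl fun p _ => Finset.sum_congr rfl fun q _ => by ring
    simp_rw [expand]
    rw [integral_finset_sum _ (fun p _ => integrable_finset_sum _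
      (fun q _ => ((hprodint p q).const_mul _)))]
    have : ∀ p : Fin n × Fin m,
        ∫ ω, ∑ q : Fin n × Fin m, (u j p.2 * u j q.2) * (δ p ω * δ q ω) ∂Q
          = (u j p.2) ^ 2 * v := by
      intro p
      rw [integral_finset_sum _ (fun q _ => ((hprodint p q).const_mul _))]
      have : ∀ q : Fin n × Fin m,
          ∫ ω, (u j p.2 * u j q.2) * (δ p ω * δ q ω) ∂Q
            = (u j p.2 * u j q.2) * (if p = q then v else 0) := by
        intro q; rw [integral_const_mul _ _, hprod]
      simp_rw [this]
      simp [Finset.sum_ite_eq, sq]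
    simp_rw [this]
    rw [← Finset.sum_mul]
    have hu1 : ∑ p : Fin n × Fin m, (u j p.2) ^ 2 = n := by
      rw [Fintype.sum_prod_type]
      have h1 : (⟪u j, u j⟫) = 1 := by
        have := orthonormal_iff_ite.mp u.orthonormal j j
        simpa using this
      rw [PiLp.inner_apply] at h1
      simp only [RCLike.inner_apply, conj_trivial] at h1
      have : ∑ l : Fin m, (u j l) ^ 2 = 1 := by simpa [sq] using h1
      simp [this]
    rw [hu1]; ring
  -- the norm formula
  have hnorm : ∀ x : EuclideanSpace ℝ (Fin m),
      ‖P.symm x‖ ^ 2 = ∑ j : Fin m, ((σ j) ^ 2)⁻¹ * (⟪u j, x⟫) ^ 2 := by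
    intro x
    set A := ContinuousLinearMap.adjoint T with hA
    set w : Fin m → Ym := fun j => (σ j)⁻¹ • A (u j) with hw
    have hAinner : ∀ j k, ⟪A (u j), A (u k)⟫ = if j = k then (σ k) ^ 2 else 0 := by
      intro j k
      rw [hA, ContinuousLinearMap.adjoint_inner_left, hsv k, inner_smul_right]
      have := orthonormal_iff_ite.mp u.orthonormal j k
      rw [this]
      by_cases hjk : j = k <;> simp [hjk]
    have hwortho : Orthonormal ℝ w := by
      rw [orthonormal_iff_ite]
      intro j k
      simp only [hw, inner_smul_left, inner_smul_right, conj_trivial, hAinner]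
      by_cases hjk : j = k
      · subst hjk
        simp only [if_pos rfl]
        rw [sq]
        field_simp
        exact div_self (by simp [(hσ j).ne'])
      · simp [hjk]
    have hPsymm : ∀ j, (P.symm : EuclideanSpace ℝ (Fin m) → Ym) (u j) = (σ j)⁻¹ • w j := by
      intro j
      have hσj : (σ j) ≠ 0 := (hσ j).ne'
      have h1 : (P.symm : EuclideanSpace ℝ (Fin m) → Ym) (((σ j) ^ 2) • u j) = A (u j) := by
        rw [← hsv j]; exact P.symm_apply_apply _
      rw [_root_.map_smul] at h1
      have h3 : (P.symm : EuclideanSpace ℝ (Fin m) → Ym) (u j) = ((σ j) ^ 2)⁻¹ • A (u j) := by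
        rw [← h1, smul_smul, inv_mul_cancel₀ (pow_ne_zero 2 hσj), one_smul]
      rw [h3, hw]
      simp only [smul_smul]
      congr 1
      rw [sq, mul_inv]
    have hx : x = ∑ j : Fin m, (⟪u j, x⟫) • u j := (u.sum_repr' x).symm
    have hPx : (P.symm : EuclideanSpace ℝ (Fin m) → Ym) x
        = ∑ j : Fin m, ((⟪u j, x⟫) * (σ j)⁻¹) • w j := by
      conv_lhs => rw [hx]
      rw [map_sum]
      refine Finset.sum_congr rfl fun j _ => ?_
      rw [_root_.map_smul, hPsymm j, smul_smul]
    rw [hPx, ← real_inner_self_eq_norm_sq, hwortho.inner_sum]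
    refine Finset.sum_congr rfl fun j _ => ?_
    simp only [conj_trivial]
    have hσj : (σ j) ≠ 0 := (hσ j).ne'
    field_simp
  -- pointwise rewrite of the integrand
  have hpt : ∀ ω, ‖P.symm (show EuclideanSpace ℝ (Fin m) from
        WithLp.toLp 2 fun l => (∑ i : Fin n, δ (i, l) ω) / n)‖ ^ 2
      = ∑ j : Fin m, (((σ j) ^ 2)⁻¹ * (1 / (n : ℝ) ^ 2))
          * (∑ p : Fin n × Fin m, u j p.2 * δ p ω) ^ 2 := by
    intro ω
    rw [hnorm]
    refine Finset.sum_congr rfl fun j _ => ?_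
    have hin : (⟪u j, (show EuclideanSpace ℝ (Fin m) from
        WithLp.toLp 2 fun l => (∑ i : Fin n, δ (i, l) ω) / n)⟫)
        = (∑ p : Fin n × Fin m, u j p.2 * δ p ω) / n := by
      rw [PiLp.inner_apply]
      simp only [RCLike.inner_apply, conj_trivial]
      rw [Fintype.sum_prod_type, Finset.sum_comm, Finset.sum_div]
      refine Finset.sum_congr rfl fun l _ => ?_
      simp [Finset.mul_sum, Finset.sum_div, mul_div_assoc]
      rw [Finset.sum_mul]; exact Finset.sum_congr rfl fun _ _ => mul_comm _ _
    rw [hin, div_pow]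
    ring
  simp_rw [hpt]
  -- integrability of S j squared
  have hSint : ∀ j : Fin m,
      Integrable (fun ω => (∑ p : Fin n × Fin m, u j p.2 * δ p ω) ^ 2) Q := by
    intro j
    have hS2 : MemLp (fun ω => ∑ p : Fin n × Fin m, u j p.2 * δ p ω) 2 Q := by
      have h := memLp_finset_sum' (μ := Q) Finset.univ
        (f := fun (p : Fin n × Fin m) (ω : Ω) => u j p.2 * δ p ω)
        (fun p _ => (hM2 p).const_mul _)
      have heq : (∑ p : Fin n × Fin m, fun ω => u j p.2 * δ p ω)
          = fun ω => ∑ p : Fin n × Fin m, u j p.2 * δ p ω := by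
        funext ω; simp
      rwa [heq] at h
    have := (memLp_two_iff_integrable_sq hS2.aestronglyMeasurable).1 hS2
    simpa using this
  rw [integral_finset_sum _ (fun j _ => ((hSint j).const_mul _))]
  have : ∀ j : Fin m, ∫ ω, (((σ j) ^ 2)⁻¹ * (1 / (n : ℝ) ^ 2))
      * (∑ p : Fin n × Fin m, u j p.2 * δ p ω) ^ 2 ∂Q
      = (((σ j) ^ 2)⁻¹ * (1 / (n : ℝ) ^ 2)) * (v * n) := by
    intro j
    rw [integral_const_mul _ _, key j]
  simp_rw [this]
  rw [Finset.mul_sum]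
  refine Finset.sum_congr rfl fun j _ => ?_
  have hnn : (1 / (n : ℝ) ^ 2) * (v * n) = v / n := by
    rw [sq]; field_simp
  rw [mul_assoc, hnn]; ring
end

section
/- In the setting of the previous statement, let x̂ = ∑_{j=1}^∞ j^{-2} v_j. If ν_m, ρ_m > 0 and w_m ∈ ℓ²(ℕ) satisfy P_{N(P_m K)^⊥} x̂ = ((P_m K)* P_m K)^{ν_m/2} w_m with ‖w_m‖ = ρ_m, then ρ_m ≥ ( m^{-3} e^{-m} + ⌈e^m⌉^{-3} √(1−e^{-2m}) ) / ( m^{-2} e^{-2m} + ⌈e^m⌉^{-2}(1−e^{-2m}) )^{(1+ν_m)/2}, and in particular ρ_m ≥ e^{ν_m m} / (2^{(1+ν_m)/2} m³). -/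
open RealInnerProductSpace

noncomputable def smallSV (m : ℕ) : ℝ :=
  Real.sqrt (((m : ℝ) ^ 2)⁻¹ * Real.exp (-(2 * (m : ℝ))) +
    ((Nat.ceil (Real.exp (m : ℝ)) : ℝ) ^ 2)⁻¹ * (1 - Real.exp (-(2 * (m : ℝ)))))

noncomputable def smallSingVec {H : Type*} [NormedAddCommGroup H] [Module ℝ H]
    (v : ℕ → H) (m : ℕ) : H :=
  (smallSV m)⁻¹ •
    (((m : ℝ)⁻¹ * Real.exp (-(m : ℝ))) • v m +
      ((Nat.ceil (Real.exp (m : ℝ)) : ℝ)⁻¹ * Real.sqrt (1 - Real.exp (-(2 * (m : ℝ))))) •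
        v (Nat.ceil (Real.exp (m : ℝ))))

lemma inner_xhat {H : Type*} [NormedAddCommGroup H] [InnerProductSpace ℝ H] [CompleteSpace H]
    (v : ℕ → H) (hv : Orthonormal ℝ v) (k : ℕ) (hk : 1 ≤ k) :
    ⟪∑' j : ℕ, ((((j : ℝ) + 1) ^ 2)⁻¹) • v (j + 1), v k⟫ = ((k : ℝ) ^ 2)⁻¹ := by
  have hsum2 : Summable (fun n : ℕ => ((n : ℝ) ^ 2)⁻¹) := by
    simpa [one_div] using Real.summable_one_div_nat_pow.mpr one_lt_two
  have hsum1 : Summable (fun j : ℕ => (((j : ℝ) + 1) ^ 2)⁻¹) := by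
    have := (summable_nat_add_iff (f := fun n : ℕ => ((n : ℝ) ^ 2)⁻¹) 1).mpr hsum2
    simpa using this
  have hsum : Summable (fun j : ℕ => ((((j : ℝ) + 1) ^ 2)⁻¹) • v (j + 1)) := by
    apply Summable.of_norm
    have heq : ∀ j : ℕ, ‖((((j : ℝ) + 1) ^ 2)⁻¹) • v (j + 1)‖ = (((j : ℝ) + 1) ^ 2)⁻¹ := by
      intro j
      rw [norm_smul, hv.1, Real.norm_eq_abs, abs_of_nonneg (by positivity), mul_one]
    simpa [heq] using hsum1
  have hmap := (innerSL ℝ (v k)).map_tsum hsum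
  have hterm : ∀ j : ℕ, ⟪v k, ((((j : ℝ) + 1) ^ 2)⁻¹) • v (j + 1)⟫
      = if j = k - 1 then ((k : ℝ) ^ 2)⁻¹ else 0 := by
    intro j
    rw [real_inner_smul_right]
    rcases eq_or_ne j (k - 1) with h | h
    · subst h
      have h1 : (k - 1) + 1 = k := Nat.succ_pred_eq_of_pos hk
      have hc : ((k - 1 : ℕ) : ℝ) + 1 = (k : ℝ) := by exact_mod_cast congrArg (Nat.cast (R := ℝ)) h1
      rw [h1, hc, orthonormal_iff_ite.mp hv k k]
      simp
    · have h2 : k ≠ j + 1 := by omega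
      rw [orthonormal_iff_ite.mp hv k (j + 1)]
      simp [h2, h]
  rw [real_inner_comm]
  calc ⟪v k, ∑' j : ℕ, ((((j : ℝ) + 1) ^ 2)⁻¹) • v (j + 1)⟫
      = ∑' j : ℕ, ⟪v k, ((((j : ℝ) + 1) ^ 2)⁻¹) • v (j + 1)⟫ := hmap
    _ = ((k : ℝ) ^ 2)⁻¹ := by
        simp only [hterm]
        rw [tsum_eq_single (k - 1) (fun j hj => by simp [hj])]
        simp

/-- With `K v_j = j⁻¹ v_j`, the discretisation `P_m` of
Statement 14 and `x̂ = ∑_{j≥1} j⁻² v_j`, any source representation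
`P_{N(P_mK)^⊥} x̂ = ((P_mK)* P_mK)^{ν_m/2} w_m` with `‖w_m‖ = ρ_m` (expressed on
the small singular direction `v_m^{(m)}` as
`⟨x̂, v_m^{(m)}⟩ = (σ_m^{(m)})^{ν_m} ⟨w_m, v_m^{(m)}⟩`) forces
`ρ_m ≥ (m⁻³e^{−m} + ⌈e^m⌉⁻³√(1−e^{−2m})) / (m⁻²e^{−2m} + ⌈e^m⌉⁻²(1−e^{−2m}))^{(1+ν_m)/2}`,
and in particular `ρ_m ≥ e^{ν_m m}/(2^{(1+ν_m)/2} m³)`. -/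
theorem statement15
    {H : Type*} [NormedAddCommGroup H] [InnerProductSpace ℝ H] [CompleteSpace H]
    (v : ℕ → H) (hv : Orthonormal ℝ v)
    (K : H →L[ℝ] H) (hK : ∀ j : ℕ, 1 ≤ j → K (v j) = ((j : ℝ))⁻¹ • v j)
    (m : ℕ) (hm : 2 ≤ m)
    (P : H →L[ℝ] EuclideanSpace ℝ (Fin m))
    (hP : ∀ (y : H) (j : Fin m), P y j =
      if (j : ℕ) + 1 < m then ⟪y, v ((j : ℕ) + 1)⟫
      else ⟪y, Real.exp (-(m : ℝ)) • v m +
        Real.sqrt (1 - Real.exp (-(2 * (m : ℝ)))) • v (Nat.ceil (Real.exp (m : ℝ)))⟫)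
    (ν ρ : ℝ) (hν : 0 < ν) (hρ : 0 < ρ) (w : H) (hwρ : ‖w‖ = ρ)
    (hsrc : ⟪∑' j : ℕ, ((((j : ℝ) + 1) ^ 2)⁻¹) • v (j + 1), smallSingVec v m⟫
      = smallSV m ^ ν * ⟪w, smallSingVec v m⟫) :
    ρ ≥ (((m : ℝ) ^ 3)⁻¹ * Real.exp (-(m : ℝ)) +
          ((Nat.ceil (Real.exp (m : ℝ)) : ℝ) ^ 3)⁻¹ *
            Real.sqrt (1 - Real.exp (-(2 * (m : ℝ))))) /
        (((m : ℝ) ^ 2)⁻¹ * Real.exp (-(2 * (m : ℝ))) +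
          ((Nat.ceil (Real.exp (m : ℝ)) : ℝ) ^ 2)⁻¹ *
            (1 - Real.exp (-(2 * (m : ℝ))))) ^ ((1 + ν) / 2) ∧
    ρ ≥ Real.exp (ν * m) / (2 ^ ((1 + ν) / 2) * (m : ℝ) ^ 3) := by
  set n : ℕ := Nat.ceil (Real.exp (m : ℝ)) with hn
  have hm1 : (1 : ℝ) ≤ (m : ℝ) := by exact_mod_cast hm.trans' one_le_two
  have hm0 : (0 : ℝ) < (m : ℝ) := lt_of_lt_of_le one_pos hm1
  have hmexp : (m : ℝ) < Real.exp (m : ℝ) := by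
    have := Real.add_one_le_exp (m : ℝ); linarith
  have hmn : m < n := Nat.lt_ceil.mpr hmexp
  have hn1 : 1 ≤ n := by omega
  have hn0 : (0 : ℝ) < (n : ℝ) := by exact_mod_cast hn1
  have hnE : Real.exp (m : ℝ) ≤ (n : ℝ) := Nat.le_ceil _
  have hE : 0 < 1 - Real.exp (-(2 * (m : ℝ))) := by
    have : Real.exp (-(2 * (m : ℝ))) < 1 := Real.exp_lt_one_iff.mpr (by linarith)
    linarith
  have hS0 : 0 < ((m : ℝ) ^ 2)⁻¹ * Real.exp (-(2 * (m : ℝ))) +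
      ((n : ℝ) ^ 2)⁻¹ * (1 - Real.exp (-(2 * (m : ℝ)))) := by
    have h1 : 0 < ((m : ℝ) ^ 2)⁻¹ * Real.exp (-(2 * (m : ℝ))) := by positivity
    have h2 : 0 ≤ ((n : ℝ) ^ 2)⁻¹ * (1 - Real.exp (-(2 * (m : ℝ)))) := by
      exact mul_nonneg (by positivity) hE.le
    linarith
  set S : ℝ := ((m : ℝ) ^ 2)⁻¹ * Real.exp (-(2 * (m : ℝ))) +
      ((n : ℝ) ^ 2)⁻¹ * (1 - Real.exp (-(2 * (m : ℝ)))) with hSdef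
  set c1 : ℝ := (m : ℝ)⁻¹ * Real.exp (-(m : ℝ)) with hc1def
  set c2 : ℝ := (n : ℝ)⁻¹ * Real.sqrt (1 - Real.exp (-(2 * (m : ℝ)))) with hc2def
  have hc1 : 0 < c1 := by positivity
  have hc2 : 0 < c2 := by
    apply mul_pos (by positivity) (Real.sqrt_pos.mpr hE)
  have hexp2 : Real.exp (-(m : ℝ)) ^ 2 = Real.exp (-(2 * (m : ℝ))) := by
    rw [sq, ← Real.exp_add]; ring_nf
  have hSsum : c1 ^ 2 + c2 ^ 2 = S := by
    rw [hc1def, hc2def, hSdef, mul_pow, mul_pow, Real.sq_sqrt hE.le, hexp2, inv_pow, inv_pow]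
  set σ : ℝ := smallSV m with hσdef
  have hσS : σ = Real.sqrt S := rfl
  have hσ0 : 0 < σ := by rw [hσS]; exact Real.sqrt_pos.mpr hS0
  have hssv : smallSingVec v m = σ⁻¹ • (c1 • v m + c2 • v n) := rfl
  -- inner products with x̂
  have hxm := inner_xhat v hv m (by omega)
  have hxn := inner_xhat v hv n hn1
  set A : ℝ := c1 * ((m : ℝ) ^ 2)⁻¹ + c2 * ((n : ℝ) ^ 2)⁻¹ with hAdef
  have hA0 : 0 < A := by
    apply add_pos (mul_pos hc1 (by positivity)) (mul_pos hc2 (by positivity))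
  have hinner : ⟪∑' j : ℕ, ((((j : ℝ) + 1) ^ 2)⁻¹) • v (j + 1), smallSingVec v m⟫
      = σ⁻¹ * A := by
    rw [hssv, real_inner_smul_right, inner_add_right, real_inner_smul_right,
      real_inner_smul_right, hxm, hxn]
  -- norm of the unit vector
  have hmn' : ⟪v m, v n⟫ = 0 := by
    rw [orthonormal_iff_ite.mp hv m n]; simp [hmn.ne]
  have hz : ‖c1 • v m + c2 • v n‖ = σ := by
    rw [hσS, ← Real.sqrt_sq (norm_nonneg _)]
    congr 1
    rw [← hSsum, norm_add_sq_real, real_inner_smul_left, real_inner_smul_right, hmn',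
      norm_smul, norm_smul, hv.1, hv.1, Real.norm_eq_abs, Real.norm_eq_abs,
      abs_of_pos hc1, abs_of_pos hc2]
    ring
  have hu1 : ‖smallSingVec v m‖ = 1 := by
    rw [hssv, norm_smul, hz, Real.norm_eq_abs, abs_of_pos (inv_pos.mpr hσ0),
      inv_mul_cancel₀ hσ0.ne']
  -- rewrite the source condition
  rw [hinner] at hsrc
  have hσν : (0 : ℝ) < σ ^ ν := Real.rpow_pos_of_pos hσ0 ν
  have hwu : ⟪w, smallSingVec v m⟫ = A / σ ^ (1 + ν) := by
    rw [Real.rpow_add hσ0, Real.rpow_one, eq_div_iff (by positivity)]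
    have : σ ^ ν * ⟪w, smallSingVec v m⟫ * σ = σ⁻¹ * A * σ := by rw [← hsrc]
    rw [inv_mul_eq_div, div_mul_cancel₀ _ hσ0.ne'] at this
    linarith [this]
  -- Cauchy–Schwarz
  have hCS : A / σ ^ (1 + ν) ≤ ρ := by
    rw [← hwu, ← hwρ]
    calc ⟪w, smallSingVec v m⟫ ≤ ‖w‖ * ‖smallSingVec v m‖ := real_inner_le_norm _ _
      _ = ‖w‖ := by rw [hu1, mul_one]
  have hσpow : σ ^ (1 + ν) = S ^ ((1 + ν) / 2) := by
    rw [hσS, Real.sqrt_eq_rpow, ← Real.rpow_mul hS0.le]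
    ring_nf
  have hSpow0 : (0 : ℝ) < S ^ ((1 + ν) / 2) := Real.rpow_pos_of_pos hS0 _
  constructor
  · have hAeq : (((m : ℝ) ^ 3)⁻¹ * Real.exp (-(m : ℝ)) +
        ((n : ℝ) ^ 3)⁻¹ * Real.sqrt (1 - Real.exp (-(2 * (m : ℝ))))) = A := by
      rw [hAdef, hc1def, hc2def]
      field_simp
    rw [hAeq, ge_iff_le, ← hσpow]
    exact hCS
  · -- second bound
    have hS2 : S ≤ 2 * Real.exp (-(2 * (m : ℝ))) := by
      have hm2 : ((m : ℝ) ^ 2)⁻¹ ≤ 1 := by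
        rw [inv_le_one_iff₀]; right; rw [sq]
        simpa using mul_le_mul hm1 hm1 zero_le_one hm0.le
      have hn2 : ((n : ℝ) ^ 2)⁻¹ ≤ Real.exp (-(2 * (m : ℝ))) := by
        rw [show (-(2 * (m : ℝ))) = -((m:ℝ) + (m:ℝ)) by ring, Real.exp_neg, Real.exp_add]
        rw [inv_le_inv₀ (by positivity) (by positivity), sq]
        exact mul_le_mul hnE hnE (Real.exp_pos _).le hn0.le
      have hEpos : 0 < Real.exp (-(2 * (m : ℝ))) := Real.exp_pos _
      have t1 : ((m : ℝ) ^ 2)⁻¹ * Real.exp (-(2 * (m : ℝ))) ≤ Real.exp (-(2 * (m : ℝ))) :=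
        mul_le_of_le_one_left hEpos.le hm2
      have t2 : ((n : ℝ) ^ 2)⁻¹ * (1 - Real.exp (-(2 * (m : ℝ)))) ≤ Real.exp (-(2 * (m : ℝ))) := by
        calc ((n : ℝ) ^ 2)⁻¹ * (1 - Real.exp (-(2 * (m : ℝ))))
            ≤ Real.exp (-(2 * (m : ℝ))) * 1 :=
              mul_le_mul hn2 (by linarith) hE.le hEpos.le
          _ = Real.exp (-(2 * (m : ℝ))) := mul_one _
      rw [hSdef]
      linarith
    have hp0 : 0 < (1 + ν) / 2 := by linarith
    have hA1 : ((m : ℝ) ^ 3)⁻¹ * Real.exp (-(m : ℝ)) ≤ A := by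
      rw [hAdef, hc1def]
      have h2 : 0 ≤ c2 * ((n : ℝ) ^ 2)⁻¹ := le_of_lt (mul_pos hc2 (by positivity))
      have : (m : ℝ)⁻¹ * Real.exp (-(m : ℝ)) * ((m : ℝ) ^ 2)⁻¹
          = ((m : ℝ) ^ 3)⁻¹ * Real.exp (-(m : ℝ)) := by
        field_simp
      linarith [this, h2]
    have hmono : (2 * Real.exp (-(2 * (m : ℝ)))) ^ ((1 + ν) / 2) ≥ S ^ ((1 + ν) / 2) :=
      Real.rpow_le_rpow hS0.le hS2 hp0.le
    have hD0 : (0 : ℝ) < (2 * Real.exp (-(2 * (m : ℝ)))) ^ ((1 + ν) / 2) :=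
      Real.rpow_pos_of_pos (by positivity) _
    have hstep : ((m : ℝ) ^ 3)⁻¹ * Real.exp (-(m : ℝ)) /
        (2 * Real.exp (-(2 * (m : ℝ)))) ^ ((1 + ν) / 2) ≤ ρ := by
      calc ((m : ℝ) ^ 3)⁻¹ * Real.exp (-(m : ℝ)) /
            (2 * Real.exp (-(2 * (m : ℝ)))) ^ ((1 + ν) / 2)
          ≤ A / (2 * Real.exp (-(2 * (m : ℝ)))) ^ ((1 + ν) / 2) := by
            gcongr
        _ ≤ A / S ^ ((1 + ν) / 2) := by
            gcongr
        _ ≤ ρ := by rw [← hσpow]; exact hCS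
    -- identify the final expression
    have hfinal : ((m : ℝ) ^ 3)⁻¹ * Real.exp (-(m : ℝ)) /
        (2 * Real.exp (-(2 * (m : ℝ)))) ^ ((1 + ν) / 2)
        = Real.exp (ν * m) / (2 ^ ((1 + ν) / 2) * (m : ℝ) ^ 3) := by
      have h2p : (0:ℝ) < 2 ^ ((1 + ν)/2) := Real.rpow_pos_of_pos two_pos _
      rw [Real.mul_rpow (by norm_num) (Real.exp_pos _).le, ← Real.exp_mul,
        show -(2 * (m:ℝ)) * ((1 + ν) / 2) = -(m:ℝ) + -(ν * (m:ℝ)) by ring,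
        Real.exp_add, Real.exp_neg (ν * (m:ℝ))]
      have e1 : Real.exp (-(m:ℝ)) ≠ 0 := Real.exp_ne_zero _
      have e2 : Real.exp (ν * (m:ℝ)) ≠ 0 := Real.exp_ne_zero _
      field_simp
    rw [ge_iff_le, ← hfinal]
    exact hstep
end

section
/- Let A_m, A be bounded self-adjoint compact positive semidefinite operators on a Hilbert space with ‖A_m − A‖ → 0, A injective. Let (v_j^{(m)}) and (v_j^{(∞)}) denote orthonormal eigenvectors of A_m and A for the nonzero eigenvalues ordered decreasingly. Then for every x and every ε > 0 there exists M ∈ ℕ such that limsup_{m→∞} ∑_{j=M+1}^{∞} ⟨x, v_j^{(m)}⟩² ≤ ε. -/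
open Filter Topology RealInnerProductSpace


lemma keyA {H : Type*} [NormedAddCommGroup H] [InnerProductSpace ℝ H]
    (T : H →L[ℝ] H) (hT : IsCompactOperator T) {δ : ℝ} (hδ : 0 < δ) :
    ∃ M : ℕ, ∀ u : ℕ → H, Orthonormal ℝ u → ∃ j ≤ M, ⟪T (u j), u j⟫ < δ := by
  classical
  have hT' : IsCompactOperator (T : H →ₗ[ℝ] H) := hT
  obtain ⟨K, hK, hTK⟩ := hT'.image_closedBall_subset_compact (𝕜₁ := ℝ) 1
  obtain ⟨t, htfin, htcover⟩ := Metric.totallyBounded_iff.1 hK.totallyBounded (δ/4) (by positivity)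
  set tF : Finset H := htfin.toFinset with htF
  set Kc : ℕ := ⌊(2*‖T‖/δ)^2⌋₊ + 1 with hKc
  refine ⟨tF.card * Kc, fun u hu => ?_⟩
  by_contra hcon
  push_neg at hcon
  set M : ℕ := tF.card * Kc with hMdef
  have hnorm1 : ∀ j, ‖u j‖ = 1 := hu.1
  have hmem : ∀ j, T (u j) ∈ K := by
    intro j
    apply hTK
    exact ⟨u j, by simp [Metric.mem_closedBall, hnorm1 j], rfl⟩
  have hc : ∀ j : ℕ, ∃ y ∈ tF, T (u j) ∈ Metric.ball y (δ/4) := by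
    intro j
    have := htcover (hmem j)
    simp only [Set.mem_iUnion, exists_prop] at this
    obtain ⟨y, hy, hby⟩ := this
    exact ⟨y, htfin.mem_toFinset.2 hy, hby⟩
  set c : ℕ → H := fun j => (hc j).choose with hcdef
  have hc1 : ∀ j, c j ∈ tF := fun j => (hc j).choose_spec.1
  have hc2 : ∀ j, T (u j) ∈ Metric.ball (c j) (δ/4) := fun j => (hc j).choose_spec.2
  have hmaps : ∀ j ∈ Finset.range (M+1), c j ∈ tF := fun j _ => hc1 j
  have hcard : tF.card * Kc < (Finset.range (M+1)).card := by
    simp [hMdef]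
  obtain ⟨y, hy, hF⟩ := Finset.exists_lt_card_fiber_of_mul_lt_card_of_maps_to hmaps hcard
  set F : Finset ℕ := (Finset.range (M+1)).filter (fun j => c j = y) with hFdef
  have hFpos : 0 < F.card := lt_of_le_of_lt (Nat.zero_le _) hF
  obtain ⟨j0, hj0⟩ := Finset.card_pos.1 hFpos
  set w : H := T (u j0) with hwdef
  have hwnorm : ‖w‖ ≤ ‖T‖ := by
    calc ‖w‖ ≤ ‖T‖ * ‖u j0‖ := T.le_opNorm _
    _ = ‖T‖ := by rw [hnorm1 j0, mul_one]
  have hlow : ∀ j ∈ F, δ/2 ≤ ⟪w, u j⟫ := by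
    intro j hj
    simp only [hFdef, Finset.mem_filter, Finset.mem_range] at hj hj0
    have hjM : j ≤ M := by omega
    have h1 : δ ≤ ⟪T (u j), u j⟫ := hcon j hjM
    have hdist : ‖w - T (u j)‖ < δ/2 := by
      have d1 := Metric.mem_ball.1 (hc2 j0)
      have d2 := Metric.mem_ball.1 (hc2 j)
      rw [hj.2] at d2; rw [hj0.2] at d1
      calc ‖w - T (u j)‖ = dist w (T (u j)) := (dist_eq_norm _ _).symm
      _ ≤ dist w y + dist (T (u j)) y := dist_triangle_right _ _ _
      _ < δ/4 + δ/4 := by exact add_lt_add d1 d2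
      _ = δ/2 := by ring
    have h2 : ⟪w, u j⟫ = ⟪T (u j), u j⟫ + ⟪w - T (u j), u j⟫ := by
      rw [inner_sub_left]; ring
    have h3 : |⟪w - T (u j), u j⟫| ≤ ‖w - T (u j)‖ := by
      calc |⟪w - T (u j), u j⟫| ≤ ‖w - T (u j)‖ * ‖u j‖ := abs_real_inner_le_norm _ _
      _ = ‖w - T (u j)‖ := by rw [hnorm1 j, mul_one]
    have := abs_le.1 h3
    nlinarith
  have hbessel : ∑ j ∈ F, ‖⟪u j, w⟫‖^2 ≤ ‖w‖^2 := hu.sum_inner_products_le w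
  have hsumlow : (F.card : ℝ) * (δ/2)^2 ≤ ∑ j ∈ F, ‖⟪u j, w⟫‖^2 := by
    calc (F.card : ℝ) * (δ/2)^2 = ∑ _j ∈ F, (δ/2)^2 := by
          rw [Finset.sum_const, nsmul_eq_mul]
    _ ≤ ∑ j ∈ F, ‖⟪u j, w⟫‖^2 := by
          apply Finset.sum_le_sum
          intro j hj
          have := hlow j hj
          rw [real_inner_comm, Real.norm_eq_abs, sq_abs]
          nlinarith
  have hKclt : (2*‖T‖/δ)^2 < (Kc : ℝ) := by
    rw [hKc]; push_cast; exact Nat.lt_floor_add_one _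
  have hFKc : (Kc : ℝ) ≤ (F.card : ℝ) := by exact_mod_cast hF.le
  have hfinal : ‖T‖^2 < (F.card : ℝ) * (δ/2)^2 := by
    have e : (2*‖T‖/δ)^2 * (δ/2)^2 = ‖T‖^2 := by
      field_simp
    nlinarith [mul_lt_mul_of_pos_right (lt_of_lt_of_le hKclt hFKc)
      (show (0:ℝ) < (δ/2)^2 by positivity)]
  nlinarith [norm_nonneg w]


lemma keyDense {H : Type*} [NormedAddCommGroup H] [InnerProductSpace ℝ H] [CompleteSpace H]
    (T : H →L[ℝ] H) (hsa : IsSelfAdjoint T) (hinj : Function.Injective T)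
    (x : H) {δ : ℝ} (hδ : 0 < δ) : ∃ y, ‖x - T y‖ < δ := by
  set K : Submodule ℝ H := LinearMap.range (T : H →ₗ[ℝ] H) with hKdef
  have hbot : Kᗮ = ⊥ := by
    rw [Submodule.eq_bot_iff]
    intro w hw
    have hTw : T w = 0 := by
      have h1 : ⟪T w, T w⟫ = 0 := by
        have h2 : (T (T w) : H) ∈ K := ⟨T w, rfl⟩
        have h3 := hw _ h2
        have h4 : ⟪T (T w), w⟫ = ⟪T w, T w⟫ := hsa.isSymmetric (T w) w
        rw [← h4]; exact h3
      exact inner_self_eq_zero.1 h1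
    have : T w = T 0 := by rw [hTw, map_zero]
    exact hinj this
  have htop : K.topologicalClosure = ⊤ := Submodule.topologicalClosure_eq_top_iff.2 hbot
  have hxmem : x ∈ closure (K : Set H) := by
    have : x ∈ K.topologicalClosure := by rw [htop]; trivial
    exact this
  obtain ⟨z, hz, hdist⟩ := Metric.mem_closure_iff.1 hxmem δ hδ
  obtain ⟨y, rfl⟩ := hz
  exact ⟨y, by rwa [← dist_eq_norm]⟩


lemma besselR {H : Type*} [NormedAddCommGroup H] [InnerProductSpace ℝ H]
    {w : ℕ → H} (hw : Orthonormal ℝ w) (z : H) :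
    Summable (fun j => ⟪z, w j⟫^2) ∧ ∑' j, ⟪z, w j⟫^2 ≤ ‖z‖^2 := by
  have he : (fun j => ⟪z, w j⟫^2) = fun j => ‖⟪w j, z⟫‖^2 := by
    funext j
    rw [real_inner_comm, Real.norm_eq_abs, sq_abs]
  constructor
  · rw [he]; exact hw.inner_products_summable z
  · rw [he]; exact hw.tsum_inner_products_le z

/-- Let `A_m → A` in operator norm, all compact self-adjoint
positive semidefinite, `A` injective, and let `(v_j^{(m)})_j` be orthonormal
eigenvectors of `A_m` for its nonzero eigenvalues `μ_j^{(m)}` ordered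
decreasingly, spanning `(ker A_m)^⊥` (any vector orthogonal to all of them is
in the kernel). Then for every `x` and `ε > 0` there is `M` with
`limsup_m ∑_{j>M} ⟨x, v_j^{(m)}⟩² ≤ ε`. -/
theorem statement18
    {H : Type*} [NormedAddCommGroup H] [InnerProductSpace ℝ H] [CompleteSpace H]
    (A : ℕ → (H →L[ℝ] H)) (Alim : H →L[ℝ] H)
    (hcomp : ∀ m, IsCompactOperator (A m)) (hcomplim : IsCompactOperator Alim)
    (hsa : ∀ m, IsSelfAdjoint (A m)) (hsalim : IsSelfAdjoint Alim)
    (hpos : ∀ m, ∀ y : H, 0 ≤ ⟪(A m) y, y⟫)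
    (hposlim : ∀ y : H, 0 ≤ ⟪Alim y, y⟫)
    (hinj : Function.Injective Alim)
    (hnorm : Tendsto (fun m => ‖A m - Alim‖) atTop (𝓝 0))
    (v : ℕ → ℕ → H) (μ : ℕ → ℕ → ℝ)
    (hon : ∀ m, Orthonormal ℝ (v m))
    (heig : ∀ m j, (A m) (v m j) = μ m j • v m j)
    (hμpos : ∀ m j, 0 < μ m j)
    (hμanti : ∀ m, Antitone (μ m))
    (hspan : ∀ m, (Submodule.span ℝ (Set.range (v m)))ᗮ ≤ LinearMap.ker ((A m : H →ₗ[ℝ] H))) :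
    ∀ x : H, ∀ ε > (0:ℝ), ∃ M : ℕ,
      Filter.limsup (fun m => ∑' j : ℕ, ⟪x, v m (j + M)⟫ ^ 2) atTop ≤ ε := by
  intro x ε hε
  obtain ⟨y, hy⟩ := keyDense Alim hsalim hinj x (half_pos (Real.sqrt_pos.2 hε))
  set δ : ℝ := Real.sqrt (ε / (4 * (‖y‖^2 + 1))) with hδdef
  have hδpos : 0 < δ := Real.sqrt_pos.2 (by positivity)
  have hδsq : δ^2 = ε / (4 * (‖y‖^2 + 1)) := Real.sq_sqrt (by positivity)
  obtain ⟨M, hM⟩ := keyA Alim hcomplim hδpos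
  refine ⟨M, ?_⟩
  -- eigenvalue bound
  have hμM : ∀ m, μ m M ≤ δ + ‖A m - Alim‖ := by
    intro m
    obtain ⟨j, hjM, hj⟩ := hM (v m) (hon m)
    have hv1 : ‖v m j‖ = 1 := (hon m).1 j
    have h1 : μ m M ≤ μ m j := hμanti m hjM
    have h2 : μ m j = ⟪A m (v m j), v m j⟫ := by
      rw [heig m j, real_inner_smul_left, real_inner_self_eq_norm_sq, hv1]
      ring
    have h3 : ⟪A m (v m j), v m j⟫
        = ⟪(A m - Alim) (v m j), v m j⟫ + ⟪Alim (v m j), v m j⟫ := by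
      rw [ContinuousLinearMap.sub_apply, inner_sub_left]
      ring
    have h4 : ⟪(A m - Alim) (v m j), v m j⟫ ≤ ‖A m - Alim‖ := by
      calc ⟪(A m - Alim) (v m j), v m j⟫ ≤ ‖(A m - Alim) (v m j)‖ * ‖v m j‖ :=
            real_inner_le_norm _ _
      _ ≤ (‖A m - Alim‖ * ‖v m j‖) * ‖v m j‖ := by
            gcongr
            exact (A m - Alim).le_opNorm _
      _ = ‖A m - Alim‖ := by rw [hv1]; ring
    linarith
  set F : ℝ → ℝ := fun t => 2*(‖x - Alim y‖ + t * ‖y‖)^2 + 2*(δ + t)^2 * ‖y‖^2 with hFdef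
  have hfg : ∀ m, (∑' j : ℕ, ⟪x, v m (j + M)⟫ ^ 2) ≤ F ‖A m - Alim‖ := by
    intro m
    set t : ℝ := δ + ‖A m - Alim‖ with htdef
    have ht0 : 0 < t := by
      have := norm_nonneg (A m - Alim); simp only [htdef]; linarith
    set w : ℕ → H := v m ∘ (fun j => j + M) with hwdef
    have hwon : Orthonormal ℝ w := (hon m).comp _ (fun a b hab => by omega)
    have hweq : ∀ j, w j = v m (j + M) := fun j => rfl
    have hpt : ∀ j, ⟪x, w j⟫^2 ≤ 2*⟪x - A m y, w j⟫^2 + 2*t^2*⟪y, w j⟫^2 := by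
      intro j
      have hμt : μ m (j + M) ≤ t := by
        have := hμanti m (show M ≤ j + M by omega)
        have := hμM m
        simp only [htdef]; linarith
      have hμ0 : 0 < μ m (j + M) := hμpos m _
      have hsym : ⟪A m y, w j⟫ = μ m (j + M) * ⟪y, w j⟫ := by
        have hsymm : ⟪A m y, w j⟫ = ⟪y, A m (w j)⟫ := (hsa m).isSymmetric y (w j)
        rw [hsymm, hweq, heig, real_inner_smul_right]
      have hsplit : ⟪x, w j⟫ = ⟪x - A m y, w j⟫ + μ m (j + M) * ⟪y, w j⟫ := by
        rw [inner_sub_left, hsym]; ring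
      rw [hsplit]
      nlinarith [sq_nonneg (⟪x - A m y, w j⟫ - μ m (j + M) * ⟪y, w j⟫),
        sq_nonneg ⟪y, w j⟫,
        mul_nonneg (mul_nonneg (sub_nonneg.2 hμt) (by linarith : (0:ℝ) ≤ t + μ m (j + M)))
          (sq_nonneg ⟪y, w j⟫)]
    have hS1 := besselR hwon (x - A m y)
    have hS2 := besselR hwon y
    have hSx := besselR hwon x
    have hRsum : Summable (fun j => 2*⟪x - A m y, w j⟫^2 + 2*t^2*⟪y, w j⟫^2) :=
      (hS1.1.mul_left 2).add (hS2.1.mul_left (2*t^2))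
    have hstep : ∑' j : ℕ, ⟪x, w j⟫^2 ≤ 2*‖x - A m y‖^2 + 2*t^2*‖y‖^2 := by
      calc ∑' j : ℕ, ⟪x, w j⟫^2
          ≤ ∑' j : ℕ, (2*⟪x - A m y, w j⟫^2 + 2*t^2*⟪y, w j⟫^2) :=
            Summable.tsum_le_tsum hpt hSx.1 hRsum
      _ = 2*(∑' j : ℕ, ⟪x - A m y, w j⟫^2) + 2*t^2*(∑' j : ℕ, ⟪y, w j⟫^2) := by
            rw [Summable.tsum_add (hS1.1.mul_left 2) (hS2.1.mul_left (2*t^2)),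
              tsum_mul_left, tsum_mul_left]
      _ ≤ 2*‖x - A m y‖^2 + 2*t^2*‖y‖^2 := by
            have h1 := hS1.2
            have h2 := hS2.2
            have ht2 : (0:ℝ) ≤ 2*t^2 := by positivity
            nlinarith
    have h5 : ‖x - A m y‖ ≤ ‖x - Alim y‖ + ‖A m - Alim‖ * ‖y‖ := by
      have he : x - A m y = (x - Alim y) - (A m - Alim) y := by
        rw [ContinuousLinearMap.sub_apply]; abel
      rw [he]
      refine (norm_sub_le _ _).trans ?_
      gcongr
      exact (A m - Alim).le_opNorm y
    have h6 : ‖x - A m y‖^2 ≤ (‖x - Alim y‖ + ‖A m - Alim‖ * ‖y‖)^2 :=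
      pow_le_pow_left₀ (norm_nonneg _) h5 2
    calc (∑' j : ℕ, ⟪x, v m (j + M)⟫ ^ 2) = ∑' j : ℕ, ⟪x, w j⟫^2 := by
          exact tsum_congr fun j => by rw [hweq]
    _ ≤ 2*‖x - A m y‖^2 + 2*t^2*‖y‖^2 := hstep
    _ ≤ F ‖A m - Alim‖ := by
          simp only [hFdef, htdef]
          nlinarith
  have hFc : Continuous F := by
    simp only [hFdef]
    fun_prop
  have hgt : Tendsto (fun m => F ‖A m - Alim‖) atTop (𝓝 (F 0)) :=
    (hFc.tendsto 0).comp hnorm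
  have hls : limsup (fun m => ∑' j : ℕ, ⟪x, v m (j + M)⟫ ^ 2) atTop ≤ F 0 := by
    have h1 : limsup (fun m => ∑' j : ℕ, ⟪x, v m (j + M)⟫ ^ 2) atTop
        ≤ limsup (fun m => F ‖A m - Alim‖) atTop :=
      limsup_le_limsup (Eventually.of_forall hfg)
        (isCoboundedUnder_le_of_le atTop
          (fun m => tsum_nonneg (fun j => sq_nonneg _)))
        hgt.isBoundedUnder_le
    rwa [hgt.limsup_eq] at h1
  refine hls.trans ?_
  have hF0 : F 0 = 2*‖x - Alim y‖^2 + 2*δ^2*‖y‖^2 := by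
    simp only [hFdef]
    ring
  have hA2 : 2*‖x - Alim y‖^2 ≤ ε/2 := by
    have h7 : ‖x - Alim y‖ ≤ Real.sqrt ε / 2 := hy.le
    have hsε : Real.sqrt ε ^ 2 = ε := Real.sq_sqrt hε.le
    nlinarith [norm_nonneg (x - Alim y), Real.sqrt_nonneg ε]
  have hB2 : 2*δ^2*‖y‖^2 ≤ ε/2 := by
    rw [hδsq]
    have key : ε / (4*(‖y‖^2+1)) * ‖y‖^2 ≤ ε/4 := by
      rw [div_mul_eq_mul_div, div_le_div_iff₀ (by positivity) (by norm_num)]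
      nlinarith [sq_nonneg ‖y‖, hε.le]
    linarith
  rw [hF0]
  linarith
end
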